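/- arXiv:0905.2293 — 7 statements merged into one kernel-verified Lean document; each statement's English description precedes it below -/
import Mathlib

section
/- Let d > 2 be an integer and let ∼ be a non-crossing equivalence relation on ℤ/(2d−2) satisfying the decomposition properties (with H = ∅). Then there exist distinct elements ℓ', ℓ'' ∈ ℤ/(2d−2) with ℓ' ∼ ℓ'' and ℓ' − ℓ'' even (i.e., ℓ' and ℓ'' have the same parity). -/
/-- The cyclic interval `[a, b]` in `ZMod n`: the elements `a, a+1, …, b`
in counter-clockwise (increasing) cyclic order. -/
def cyclicInterval (n : ℕ) (a b : ZMod n) : Set (ZMod n) :=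
  {x | (x - a).val ≤ (b - a).val}

/-- The distance from `ℓ` to the next element of its `r`-equivalence class in
increasing cyclic order (equal to `n` for a singleton class). -/
noncomputable def classStep (n : ℕ) (r : ZMod n → ZMod n → Prop) (ℓ : ZMod n) : ℕ :=
  sInf {k : ℕ | 0 < k ∧ r ℓ (ℓ + (k : ZMod n))}

/-- `σ(ℓ)`: the next element of the `r`-equivalence class of `ℓ` in increasing
(counter-clockwise) cyclic order; `σ(ℓ) = ℓ` for a singleton class. -/
noncomputable def classSucc (n : ℕ) (r : ZMod n → ZMod n → Prop) (ℓ : ZMod n) : ZMod n :=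
  ℓ + ((classStep n r ℓ : ℕ) : ZMod n)

/-- The number of equivalence classes of `r` entirely contained in `S`. -/
noncomputable def numClassesIn (n : ℕ) (r : ZMod n → ZMod n → Prop) (S : Set (ZMod n)) : ℕ :=
  Set.ncard {C : Set (ZMod n) | (∃ x, C = {y | r x y}) ∧ C ⊆ S}

/-- The total number of parity changes `Σ_{[ℓ] ⊆ S} p_[ℓ]`: when `S` is a union of
equivalence classes, this is the number of `x ∈ S` for which `σ(x) - x` is odd. -/
noncomputable def pChangesIn (n : ℕ) (r : ZMod n → ZMod n → Prop) (S : Set (ZMod n)) : ℕ :=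
  Set.ncard {x : ZMod n | x ∈ S ∧ Odd ((classSucc n r x - x).val)}

/-- `S` is a union of `r`-equivalence classes. -/
def IsUnionOfClasses (n : ℕ) (r : ZMod n → ZMod n → Prop) (S : Set (ZMod n)) : Prop :=
  ∀ x ∈ S, ∀ y, r x y → y ∈ S

/-- `r` is non-crossing: for any class (witnessed by `r a b`) and any other class
(that of `x`, with `¬ r a x`), the class of `x` is entirely contained in
`[a+1, b-1]` or in `[b+1, a-1]`. -/
def NonCrossing (n : ℕ) (r : ZMod n → ZMod n → Prop) : Prop :=
  ∀ a b x : ZMod n, r a b → ¬ r a x →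
    ({y | r x y} ⊆ cyclicInterval n (a + 1) (b - 1)) ∨
    ({y | r x y} ⊆ cyclicInterval n (b + 1) (a - 1))

/-- The decomposition properties (case `H = ∅`) for an equivalence relation on
`ℤ/(2d-2)`:
(i) `2·q + Σ p = 2d` where `q` is the number of classes;
(ii) for every partition of `ℤ/(2d-2)` into two cyclic intervals `[ℓ₀,ℓ₁]` and
`[ℓ₁+1,ℓ₀-1]`, each a union of classes, with `ℓ₀, ℓ₁` of the same parity, the
analogous counts hold in each interval;
(iii) for every `ℓ`, `σ(ℓ) - ℓ` is even or `σ(ℓ) = ℓ + 1`. -/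
structure DecompositionProperties (d : ℕ) (r : ZMod (2*d-2) → ZMod (2*d-2) → Prop) : Prop where
  count : 2 * numClassesIn (2*d-2) r Set.univ + pChangesIn (2*d-2) r Set.univ = 2 * d
  split : ∀ ℓ₀ ℓ₁ : ZMod (2*d-2),
    Even ((ℓ₁ - ℓ₀).val) →
    IsUnionOfClasses (2*d-2) r (cyclicInterval (2*d-2) ℓ₀ ℓ₁) →
    IsUnionOfClasses (2*d-2) r (cyclicInterval (2*d-2) (ℓ₁ + 1) (ℓ₀ - 1)) →
    2 * numClassesIn (2*d-2) r (cyclicInterval (2*d-2) ℓ₀ ℓ₁)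
        + pChangesIn (2*d-2) r (cyclicInterval (2*d-2) ℓ₀ ℓ₁) = (ℓ₁ - ℓ₀).val + 2 ∧
    2 * numClassesIn (2*d-2) r (cyclicInterval (2*d-2) (ℓ₁ + 1) (ℓ₀ - 1))
        + pChangesIn (2*d-2) r (cyclicInterval (2*d-2) (ℓ₁ + 1) (ℓ₀ - 1))
        = (2*d-2) - (ℓ₁ - ℓ₀).val
  parity : ∀ ℓ : ZMod (2*d-2),
    Even ((classSucc (2*d-2) r ℓ - ℓ).val) ∨ classSucc (2*d-2) r ℓ = ℓ + 1

/-- For `d > 2` and a non-crossing equivalence relation on `ℤ/(2d-2)`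
satisfying the decomposition properties (with `H = ∅`), there exist distinct elements
`ℓ' ∼ ℓ''` of the same parity. -/
theorem exists_distinct_related_same_parity (d : ℕ) (hd : 2 < d)
    (r : ZMod (2*d-2) → ZMod (2*d-2) → Prop) (hr : Equivalence r)
    (hnc : NonCrossing (2*d-2) r) (hdp : DecompositionProperties d r) :
    ∃ ℓ' ℓ'' : ZMod (2*d-2), ℓ' ≠ ℓ'' ∧ r ℓ' ℓ'' ∧ Even ((ℓ' - ℓ'').val) := by
  have hn4 : 4 ≤ 2 * d - 2 := by omega
  haveI : NeZero (2*d-2) := ⟨by omega⟩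
  by_contra hcon
  push_neg at hcon
  -- hcon : ∀ ℓ' ℓ'', ℓ' ≠ ℓ'' → r ℓ' ℓ'' → ¬ Even ((ℓ' - ℓ'').val)
  -- Step 1: if x is in a non-singleton class then r x (x+1)
  have step1 : ∀ a b : ZMod (2*d-2), r a b → a ≠ b → r a (a + 1) := by
    intro a b hab hne
    have hSne : ((b - a).val) ∈ {k : ℕ | 0 < k ∧ r a (a + (k : ZMod (2*d-2)))} := by
      constructor
      · have : (b - a) ≠ 0 := sub_ne_zero.mpr (Ne.symm hne)
        have := (ZMod.val_eq_zero (b - a)).not.mpr this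
        omega
      · have : a + (((b - a).val : ℕ) : ZMod (2*d-2)) = b := by
          have := ZMod.natCast_rightInverse (n := 2*d-2) (b - a)
          rw [this]; ring
        rw [this]; exact hab
    have hmem := Nat.sInf_mem ⟨_, hSne⟩
    set s := classStep (2*d-2) r a with hs
    have hs0 : 0 < s := hmem.1
    have hras : r a (a + (s : ZMod (2*d-2))) := hmem.2
    have hsle : s ≤ (b - a).val := Nat.sInf_le hSne
    have hslt : s < (2*d-2) := lt_of_le_of_lt hsle ((b - a).val_lt)
    have hvs : ((s : ZMod (2*d-2))).val = s := ZMod.val_cast_of_lt hslt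
    have hane : a + (s : ZMod (2*d-2)) ≠ a := by
      intro hEq
      have : ((s : ZMod (2*d-2))) = 0 := by
        have := congrArg (· - a) hEq
        simpa using this
      rw [this] at hvs
      simp [ZMod.val_zero] at hvs
      omega
    have hnotEven : ¬ Even (((a + (s : ZMod (2*d-2))) - a).val) := by
      apply hcon _ _ hane (hr.symm hras)
    have hsub : (a + (s : ZMod (2*d-2))) - a = (s : ZMod (2*d-2)) := by ring
    rw [hsub, hvs] at hnotEven
    have hpar := hdp.parity a
    rcases hpar with hpe | hp1
    · exfalso
      apply hnotEven
      have : classSucc (2*d-2) r a - a = (s : ZMod (2*d-2)) := by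
        rw [classSucc, ← hs]; ring
      rw [this, hvs] at hpe
      exact hpe
    · have : a + (s : ZMod (2*d-2)) = a + 1 := by
        rw [classSucc] at hp1; rw [← hs] at hp1; exact hp1
      rw [this] at hras; exact hras
  -- Step 2: all classes are singletons
  have key : ∀ x y : ZMod (2*d-2), r x y → x = y := by
    intro x y hxy
    by_contra hne
    have h1 : r x (x + 1) := step1 x y hxy hne
    have h1ne : (x + 1 : ZMod (2*d-2)) ≠ x := by
      intro hEq
      have : (1 : ZMod (2*d-2)) = 0 := by
        have := congrArg (· - x) hEq
        simpa using this
      have hv1 : (((1 : ℕ) : ZMod (2*d-2))).val = 1 := ZMod.val_cast_of_lt (by omega)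
      rw [Nat.cast_one, this, ZMod.val_zero] at hv1
      omega
    have h2 : r (x + 1) (x + 1 + 1) := step1 (x + 1) x (hr.symm h1) h1ne
    have h3 : r x (x + 2) := by
      have := hr.trans h1 h2
      have he : x + 1 + 1 = x + 2 := by ring
      rwa [he] at this
    have h2ne : (x + 2 : ZMod (2*d-2)) ≠ x := by
      intro hEq
      have h0 : (2 : ZMod (2*d-2)) = 0 := by
        have := congrArg (· - x) hEq
        simpa using this
      have hv2 : ((2 : ZMod (2*d-2))).val = 2 := by
        have : (((2 : ℕ) : ZMod (2*d-2))).val = 2 := ZMod.val_cast_of_lt (by omega)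
        simpa using this
      rw [h0, ZMod.val_zero] at hv2
      omega
    apply hcon (x + 2) x h2ne (hr.symm h3)
    have hsub : (x + 2 : ZMod (2*d-2)) - x = 2 := by ring
    rw [hsub]
    have hv2 : ((2 : ZMod (2*d-2))).val = 2 := by
      have : (((2 : ℕ) : ZMod (2*d-2))).val = 2 := ZMod.val_cast_of_lt (by omega)
      simpa using this
    rw [hv2]
    exact even_two
  -- each class is a singleton set
  have hsing : ∀ x : ZMod (2*d-2), {y | r x y} = {x} := by
    intro x
    ext y
    simp only [Set.mem_setOf_eq, Set.mem_singleton_iff]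
    constructor
    · intro h; exact (key x y h).symm
    · rintro rfl; exact hr.refl _
  -- classSucc is the identity
  have hsucc : ∀ x : ZMod (2*d-2), classSucc (2*d-2) r x = x := by
    intro x
    have hSne : (2*d-2) ∈ {k : ℕ | 0 < k ∧ r x (x + (k : ZMod (2*d-2)))} := by
      constructor
      · omega
      · have : (((2*d-2) : ℕ) : ZMod (2*d-2)) = 0 := ZMod.natCast_self (2*d-2)
        rw [this, add_zero]; exact hr.refl x
    have hmem := Nat.sInf_mem ⟨_, hSne⟩
    have heq : x = x + ((classStep (2*d-2) r x : ℕ) : ZMod (2*d-2)) := key _ _ hmem.2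
    rw [classSucc, ← heq]
  -- numClassesIn = (2*d-2)
  have hnum : numClassesIn (2*d-2) r Set.univ = (2*d-2) := by
    rw [numClassesIn]
    have hset : {C : Set (ZMod (2*d-2)) | (∃ x, C = {y | r x y}) ∧ C ⊆ Set.univ}
        = Set.range (fun x : ZMod (2*d-2) => ({x} : Set (ZMod (2*d-2)))) := by
      ext C
      simp only [Set.mem_setOf_eq, Set.subset_univ, and_true, Set.mem_range]
      constructor
      · rintro ⟨x, rfl⟩; exact ⟨x, (hsing x).symm⟩
      · rintro ⟨x, rfl⟩; exact ⟨x, (hsing x).symm⟩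
    rw [hset]
    have hinj : Function.Injective (fun x : ZMod (2*d-2) => ({x} : Set (ZMod (2*d-2)))) := by
      intro a b hab
      simpa [Set.singleton_eq_singleton_iff] using hab
    rw [← Nat.card_coe_set_eq, Nat.card_range_of_injective hinj, Nat.card_zmod]
  -- pChangesIn = 0
  have hpc : pChangesIn (2*d-2) r Set.univ = 0 := by
    have hemp : {x : ZMod (2*d-2) | x ∈ Set.univ ∧ Odd ((classSucc (2*d-2) r x - x).val)} = ∅ := by
      ext x
      simp only [Set.mem_setOf_eq, Set.mem_univ, true_and, Set.mem_empty_iff_false,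
        iff_false]
      rw [hsucc x]
      simp [Nat.odd_iff]
    rw [pChangesIn, hemp, Set.ncard_empty]
  have := hdp.count
  rw [hnum, hpc] at this
  omega
end

section
/- Let d > 2 be an integer and let ∼ be a non-crossing equivalence relation on ℤ/(2d−2) satisfying the decomposition properties (with H = ∅). If ℓ ∈ ℤ/(2d−2) is such that σ(ℓ) − ℓ, represented in {1, …, 2d−3}, is even and greater than 2, then the cyclic interval I = [ℓ+1, σ(ℓ)−1] contains distinct elements ℓ', ℓ'' with ℓ' ∼ ℓ'' and ℓ', ℓ'' of the same parity. -/
theorem aux_exists_distinct (N : ℕ) (hN4 : 4 ≤ N) (hNeven : Even N)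
    (r : ZMod N → ZMod N → Prop) (hr : Equivalence r)
    (hnc : NonCrossing N r)
    (hsplit : ∀ ℓ₀ ℓ₁ : ZMod N,
      Even ((ℓ₁ - ℓ₀).val) →
      IsUnionOfClasses N r (cyclicInterval N ℓ₀ ℓ₁) →
      IsUnionOfClasses N r (cyclicInterval N (ℓ₁ + 1) (ℓ₀ - 1)) →
      2 * numClassesIn N r (cyclicInterval N ℓ₀ ℓ₁)
          + pChangesIn N r (cyclicInterval N ℓ₀ ℓ₁) = (ℓ₁ - ℓ₀).val + 2 ∧
      2 * numClassesIn N r (cyclicInterval N (ℓ₁ + 1) (ℓ₀ - 1))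
          + pChangesIn N r (cyclicInterval N (ℓ₁ + 1) (ℓ₀ - 1))
          = N - (ℓ₁ - ℓ₀).val)
    (hparity : ∀ ℓ : ZMod N,
      Even ((classSucc N r ℓ - ℓ).val) ∨ classSucc N r ℓ = ℓ + 1)
    (ℓ : ZMod N)
    (heven : Even ((classSucc N r ℓ - ℓ).val))
    (hgt : 2 < (classSucc N r ℓ - ℓ).val) :
    ∃ ℓ' ℓ'' : ZMod N,
      ℓ' ∈ cyclicInterval N (ℓ + 1) (classSucc N r ℓ - 1) ∧
      ℓ'' ∈ cyclicInterval N (ℓ + 1) (classSucc N r ℓ - 1) ∧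
      ℓ' ≠ ℓ'' ∧ r ℓ' ℓ'' ∧ Even ((ℓ' - ℓ'').val) := by
  haveI : NeZero N := ⟨by omega⟩
  set s := classStep N r ℓ with hsdef
  have hσ : classSucc N r ℓ = ℓ + (s : ZMod N) := rfl
  have hmemN : N ∈ {k : ℕ | 0 < k ∧ r ℓ (ℓ + (k : ZMod N))} := by
    refine ⟨by omega, ?_⟩
    rw [ZMod.natCast_self, add_zero]
    exact hr.refl ℓ
  have hsmem : 0 < s ∧ r ℓ (ℓ + (s : ZMod N)) := Nat.sInf_mem ⟨N, hmemN⟩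
  have hsleN : s ≤ N := Nat.sInf_le hmemN
  have hmin : ∀ j : ℕ, 0 < j → r ℓ (ℓ + (j : ZMod N)) → s ≤ j :=
    fun j h1 h2 => Nat.sInf_le ⟨h1, h2⟩
  have hsltN : s < N := by
    rcases lt_or_eq_of_le hsleN with h | h
    · exact h
    · exfalso
      have h0 : classSucc N r ℓ - ℓ = 0 := by
        rw [hσ, h, ZMod.natCast_self]; ring
      rw [h0, ZMod.val_zero] at hgt
      omega
  have hval : (classSucc N r ℓ - ℓ).val = s := by
    have : classSucc N r ℓ - ℓ = (s : ZMod N) := by rw [hσ]; ring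
    rw [this, ZMod.val_cast_of_lt hsltN]
  rw [hval] at heven hgt
  have hs4 : 4 ≤ s := by
    obtain ⟨c, hc⟩ := heven; omega
  have hsN2 : s ≤ N - 2 := by
    -- s even, N even, s < N
    have hNe : Even N := hNeven
    obtain ⟨c, hc⟩ := heven
    obtain ⟨e, he⟩ := hNe
    omega
  -- canonical form of elements
  have hform : ∀ x : ZMod N, x = ℓ + 1 + (((x - (ℓ + 1)).val : ℕ) : ZMod N) := by
    intro x
    rw [ZMod.natCast_zmod_val]
    ring
  have hval2 : (classSucc N r ℓ - 1 - (ℓ + 1)).val = s - 2 := by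
    have e : classSucc N r ℓ - 1 - (ℓ + 1) = ((s - 2 : ℕ) : ZMod N) := by
      rw [hσ, Nat.cast_sub (by omega : 2 ≤ s)]
      push_cast
      ring
    rw [e, ZMod.val_cast_of_lt (by omega)]
  -- membership in I
  have hI : ∀ x : ZMod N,
      x ∈ cyclicInterval N (ℓ + 1) (classSucc N r ℓ - 1) ↔ (x - (ℓ + 1)).val ≤ s - 2 := by
    intro x
    show (x - (ℓ + 1)).val ≤ (classSucc N r ℓ - 1 - (ℓ + 1)).val ↔ _
    rw [hval2]
  -- no element of I is related to ℓ
  have hnotrel : ∀ x, x ∈ cyclicInterval N (ℓ + 1) (classSucc N r ℓ - 1) → ¬ r ℓ x := by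
    intro x hx hrx
    set u := (x - (ℓ + 1)).val with hu
    have hub : u ≤ s - 2 := (hI x).mp hx
    have hxe : x = ℓ + ((u + 1 : ℕ) : ZMod N) := by
      rw [hform x, ← hu]; push_cast; ring
    rw [hxe] at hrx
    have := hmin (u + 1) (by omega) hrx
    omega
  -- I is a union of classes
  have hIunion : IsUnionOfClasses N r (cyclicInterval N (ℓ + 1) (classSucc N r ℓ - 1)) := by
    intro x hx y hrxy
    rcases hnc ℓ (classSucc N r ℓ) x (hσ ▸ hsmem.2) (hnotrel x hx) with hsub | hsub
    · exact hsub hrxy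
    · exfalso
      have hx2 : x ∈ cyclicInterval N (classSucc N r ℓ + 1) (ℓ - 1) := hsub (hr.refl x)
      set u := (x - (ℓ + 1)).val with hu
      have hub : u ≤ s - 2 := (hI x).mp hx
      have e1 : ℓ - 1 - (classSucc N r ℓ + 1) = ((N - s - 2 : ℕ) : ZMod N) := by
        rw [hσ, Nat.cast_sub (by omega : 2 ≤ N - s), Nat.cast_sub (by omega : s ≤ N),
          ZMod.natCast_self]
        push_cast
        ring
      have e2 : x - (classSucc N r ℓ + 1) = ((u + N - s : ℕ) : ZMod N) := by
        rw [hσ, Nat.cast_sub (by omega : s ≤ u + N)]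
        push_cast [ZMod.natCast_self]
        conv_lhs => rw [hform x, ← hu]
        push_cast
        ring
      have hx2' : (x - (classSucc N r ℓ + 1)).val ≤ (ℓ - 1 - (classSucc N r ℓ + 1)).val := hx2
      rw [e1, e2, ZMod.val_cast_of_lt (by omega), ZMod.val_cast_of_lt (by omega)] at hx2'
      omega
  -- the complementary interval is the complement of I
  have hcompl : ∀ x : ZMod N,
      x ∈ cyclicInterval N (classSucc N r ℓ) ℓ ↔
        x ∉ cyclicInterval N (ℓ + 1) (classSucc N r ℓ - 1) := by
    intro x
    set u := (x - (ℓ + 1)).val with hu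
    have huN : u < N := ZMod.val_lt _
    have eℓ : ℓ - classSucc N r ℓ = ((N - s : ℕ) : ZMod N) := by
      rw [hσ, Nat.cast_sub (le_of_lt hsltN), ZMod.natCast_self]
      ring
    have hmem : x ∈ cyclicInterval N (classSucc N r ℓ) ℓ ↔
        (x - classSucc N r ℓ).val ≤ (ℓ - classSucc N r ℓ).val := Iff.rfl
    by_cases hcase : u ≤ s - 2
    · constructor
      · intro h
        exfalso
        have e : x - classSucc N r ℓ = ((u + 1 + N - s : ℕ) : ZMod N) := by
          rw [hσ, Nat.cast_sub (by omega : s ≤ u + 1 + N)]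
          push_cast [ZMod.natCast_self]
          conv_lhs => rw [hform x, ← hu]
          push_cast
          ring
        have h' : (x - classSucc N r ℓ).val ≤ (ℓ - classSucc N r ℓ).val := h
        rw [e, eℓ, ZMod.val_cast_of_lt (by omega), ZMod.val_cast_of_lt (by omega)] at h'
        omega
      · intro h
        exact absurd ((hI x).mpr hcase) h
    · constructor
      · intro _ hxI
        exact hcase ((hI x).mp hxI)
      · intro _
        have e : x - classSucc N r ℓ = ((u + 1 - s : ℕ) : ZMod N) := by
          rw [hσ, Nat.cast_sub (by omega : s ≤ u + 1)]
          push_cast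
          conv_lhs => rw [hform x, ← hu]
          push_cast
          ring
        show (x - classSucc N r ℓ).val ≤ (ℓ - classSucc N r ℓ).val
        rw [e, eℓ, ZMod.val_cast_of_lt (by omega), ZMod.val_cast_of_lt (by omega)]
        omega
  -- assume no good pair exists
  by_contra hcon
  push_neg at hcon
  -- every class meeting I is a singleton
  have hsingle : ∀ x, x ∈ cyclicInterval N (ℓ + 1) (classSucc N r ℓ - 1) →
      ∀ y, r x y → y = x := by
    intro x hx y hrxy
    by_contra hne
    have hclassI : ∀ z, r x z → z ∈ cyclicInterval N (ℓ + 1) (classSucc N r ℓ - 1) :=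
      fun z hz => hIunion x hx z hz
    have hodd : ∀ z w, r x z → r x w → z ≠ w → ¬ Even ((z - w).val) := by
      intro z w hz hw hzw
      exact hcon z w (hclassI z hz) (hclassI w hw) hzw (hr.trans (hr.symm hz) hw)
    have hstep : ∀ z, r x z → r z (z + 1) := by
      intro z hz
      obtain ⟨w, hw, hwz⟩ : ∃ w, r x w ∧ w ≠ z := by
        by_cases h : x = z
        · exact ⟨y, hrxy, fun hyz => hne (hyz.trans h.symm)⟩
        · exact ⟨x, hr.refl x, h⟩
      set t := classStep N r z with ht
      have hσz : classSucc N r z = z + (t : ZMod N) := rfl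
      have hmemw : (w - z).val ∈ {k : ℕ | 0 < k ∧ r z (z + (k : ZMod N))} := by
        constructor
        · exact ZMod.val_pos.mpr (sub_ne_zero.mpr hwz)
        · have e : z + (((w - z).val : ℕ) : ZMod N) = w := by
            rw [ZMod.natCast_zmod_val]; ring
          rw [e]
          exact hr.trans (hr.symm hz) hw
      have htmem : 0 < t ∧ r z (z + (t : ZMod N)) := Nat.sInf_mem ⟨_, hmemw⟩
      have htle : t ≤ (w - z).val := Nat.sInf_le hmemw
      have htltN : t < N := lt_of_le_of_lt htle (ZMod.val_lt _)
      have hvalt : (classSucc N r z - z).val = t := by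
        have e : classSucc N r z - z = (t : ZMod N) := by rw [hσz]; ring
        rw [e, ZMod.val_cast_of_lt htltN]
      have hσz_ne : classSucc N r z ≠ z := by
        intro h
        rw [h, sub_self, ZMod.val_zero] at hvalt
        omega
      have hrσ : r z (classSucc N r z) := by rw [hσz]; exact htmem.2
      have hxσ : r x (classSucc N r z) := hr.trans hz hrσ
      have hoddt : ¬ Even ((classSucc N r z - z).val) := hodd _ z hxσ hz hσz_ne
      have hceq : classSucc N r z = z + 1 := by
        rcases hparity z with h | h
        · exact absurd h hoddt
        · exact h
      rw [hceq] at hrσ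
      exact hrσ
    have h1 : r x (x + 1) := hstep x (hr.refl x)
    have h12 : r (x + 1) (x + 2) := by
      have h := hstep (x + 1) h1
      have e : x + 1 + 1 = x + 2 := by ring
      rwa [e] at h
    have h2 : r x (x + 2) := hr.trans h1 h12
    have hne2 : x + 2 ≠ x := by
      intro h
      have h2' : (2 : ZMod N) = 0 := by
        have := congrArg (· - x) h
        simpa using this
      have h2'' : ((2 : ℕ) : ZMod N) = 0 := by push_cast; exact h2'
      rw [ZMod.natCast_eq_zero_iff] at h2''
      have := Nat.le_of_dvd (by omega) h2''
      omega
    have heven2 : Even ((x + 2 - x).val) := by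
      have e : x + 2 - x = ((2 : ℕ) : ZMod N) := by push_cast; ring
      rw [e, ZMod.val_cast_of_lt (by omega)]
      exact ⟨1, rfl⟩
    exact hodd (x + 2) x h2 (hr.refl x) hne2 heven2
  -- σ is the identity on I
  have hσfix : ∀ x, x ∈ cyclicInterval N (ℓ + 1) (classSucc N r ℓ - 1) →
      classSucc N r x = x := by
    intro x hx
    set t := classStep N r x with ht
    have hmemNx : N ∈ {k : ℕ | 0 < k ∧ r x (x + (k : ZMod N))} := by
      refine ⟨by omega, ?_⟩
      rw [ZMod.natCast_self, add_zero]
      exact hr.refl x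
    have htmem : 0 < t ∧ r x (x + (t : ZMod N)) := Nat.sInf_mem ⟨N, hmemNx⟩
    have : x + (t : ZMod N) = x := hsingle x hx _ htmem.2
    show x + (t : ZMod N) = x
    exact this
  -- count classes in I
  have hnum : numClassesIn N r (cyclicInterval N (ℓ + 1) (classSucc N r ℓ - 1)) = s - 1 := by
    unfold numClassesIn
    have h𝒞 : {C : Set (ZMod N) | (∃ x, C = {y | r x y}) ∧
        C ⊆ cyclicInterval N (ℓ + 1) (classSucc N r ℓ - 1)} =
        (fun x => ({x} : Set (ZMod N))) '' (cyclicInterval N (ℓ + 1) (classSucc N r ℓ - 1)) := by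
      ext C
      constructor
      · rintro ⟨⟨x, rfl⟩, hsub⟩
        have hx : x ∈ cyclicInterval N (ℓ + 1) (classSucc N r ℓ - 1) := hsub (hr.refl x)
        refine ⟨x, hx, ?_⟩
        ext z
        simp only [Set.mem_singleton_iff, Set.mem_setOf_eq]
        exact ⟨fun h => h ▸ hr.refl x, fun h => hsingle x hx z h⟩
      · rintro ⟨x, hx, rfl⟩
        refine ⟨⟨x, ?_⟩, fun z hz => by rwa [Set.mem_singleton_iff.mp hz]⟩
        ext z
        simp only [Set.mem_singleton_iff, Set.mem_setOf_eq]
        exact ⟨fun h => h ▸ hr.refl x, fun h => hsingle x hx z h⟩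
    rw [h𝒞, Set.ncard_image_of_injOn (fun a _ b _ h => Set.singleton_eq_singleton_iff.mp h)]
    have hIeq : cyclicInterval N (ℓ + 1) (classSucc N r ℓ - 1) =
        (fun j : ℕ => ℓ + 1 + (j : ZMod N)) '' (Set.Iic (s - 2)) := by
      ext x
      rw [hI x]
      constructor
      · intro h
        exact ⟨(x - (ℓ + 1)).val, h, (hform x).symm⟩
      · rintro ⟨j, hj, rfl⟩
        have e : ℓ + 1 + (j : ZMod N) - (ℓ + 1) = (j : ZMod N) := by ring
        rw [e, ZMod.val_cast_of_lt (by simp only [Set.mem_Iic] at hj; omega)]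
        simpa using hj
    rw [hIeq, Set.ncard_image_of_injOn ?_]
    · rw [← Finset.coe_Iic, Set.ncard_coe_finset, Nat.card_Iic]
      omega
    · intro a ha b hb hab
      simp only [Set.mem_Iic] at ha hb
      have : ((a : ZMod N)) = (b : ZMod N) := by
        have := hab
        simpa using this
      have := congrArg ZMod.val this
      rwa [ZMod.val_cast_of_lt (by omega), ZMod.val_cast_of_lt (by omega)] at this
  -- no parity changes in I
  have hp : pChangesIn N r (cyclicInterval N (ℓ + 1) (classSucc N r ℓ - 1)) = 0 := by
    unfold pChangesIn
    have he : {x : ZMod N | x ∈ cyclicInterval N (ℓ + 1) (classSucc N r ℓ - 1) ∧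
        Odd ((classSucc N r x - x).val)} = ∅ := by
      rw [Set.eq_empty_iff_forall_notMem]
      rintro x ⟨hx, hoddx⟩
      rw [hσfix x hx, sub_self, ZMod.val_zero] at hoddx
      simp [Nat.odd_iff] at hoddx
    rw [he, Set.ncard_empty]
  -- apply the split property
  obtain ⟨hsplit1, -⟩ := hsplit (ℓ + 1) (classSucc N r ℓ - 1)
    (by rw [hval2]; obtain ⟨c, hc⟩ := heven; exact ⟨c - 1, by omega⟩)
    hIunion
    (by
      have he1 : classSucc N r ℓ - 1 + 1 = classSucc N r ℓ := by ring
      have he2 : ℓ + 1 - 1 = ℓ := by ring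
      rw [he1, he2]
      intro x hx y hrxy
      rw [hcompl] at hx ⊢
      intro hyI
      exact hx (hIunion y hyI x (hr.symm hrxy)))
  rw [hnum, hp, hval2] at hsplit1
  omega


/-- For `d > 2` and a non-crossing equivalence relation on `ℤ/(2d-2)`
satisfying the decomposition properties (with `H = ∅`): if `σ(ℓ) - ℓ` (represented in
`{1, …, 2d-3}`) is even and greater than `2`, then the cyclic interval
`I = [ℓ+1, σ(ℓ)-1]` contains distinct equivalent elements of the same parity. -/
theorem exists_distinct_related_same_parity_in_interval (d : ℕ) (hd : 2 < d)
    (r : ZMod (2*d-2) → ZMod (2*d-2) → Prop) (hr : Equivalence r)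
    (hnc : NonCrossing (2*d-2) r) (hdp : DecompositionProperties d r)
    (ℓ : ZMod (2*d-2))
    (heven : Even ((classSucc (2*d-2) r ℓ - ℓ).val))
    (hgt : 2 < (classSucc (2*d-2) r ℓ - ℓ).val) :
    ∃ ℓ' ℓ'' : ZMod (2*d-2),
      ℓ' ∈ cyclicInterval (2*d-2) (ℓ + 1) (classSucc (2*d-2) r ℓ - 1) ∧
      ℓ'' ∈ cyclicInterval (2*d-2) (ℓ + 1) (classSucc (2*d-2) r ℓ - 1) ∧
      ℓ' ≠ ℓ'' ∧ r ℓ' ℓ'' ∧ Even ((ℓ' - ℓ'').val) := by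
  exact aux_exists_distinct (2 * d - 2) (by omega) ⟨d - 1, by omega⟩ r hr hnc hdp.split
    hdp.parity ℓ heven hgt
end

section
/- Let d > 2 be an integer and let ∼ be a non-crossing equivalence relation on ℤ/(2d−2) satisfying the decomposition properties (with H = ∅). Then there exists ℓ ∈ ℤ/(2d−2) such that ℓ ∼ ℓ + 2. -/
theorem val_sub' {n : ℕ} [NeZero n] (u v : ZMod n) :
    (u - v).val = if v.val ≤ u.val then u.val - v.val else n + u.val - v.val := by
  rcases le_or_gt v.val u.val with h | h
  · rw [if_pos h, ZMod.val_sub h]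
  · rw [if_neg (not_le.2 h)]
    have h1 : u - v = ((n + u.val - v.val : ℕ) : ZMod n) := by
      have hv : v.val ≤ n + u.val := le_trans (le_of_lt v.val_lt) (Nat.le_add_right n u.val)
      push_cast [Nat.cast_sub hv]
      simp [ZMod.natCast_val, ZMod.cast_id]
    rw [h1, ZMod.val_cast_of_lt (by have := u.val_lt; have := v.val_lt; omega)]

theorem mem_cyclicInterval_iff {n : ℕ} [NeZero n] (ℓ c d x : ZMod n) :
    x ∈ cyclicInterval n c d ↔
      (if (c-ℓ).val ≤ (x-ℓ).val then (x-ℓ).val - (c-ℓ).val else n + (x-ℓ).val - (c-ℓ).val)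
      ≤ (if (c-ℓ).val ≤ (d-ℓ).val then (d-ℓ).val - (c-ℓ).val else n + (d-ℓ).val - (c-ℓ).val) := by
  simp only [cyclicInterval, Set.mem_setOf_eq]
  rw [show x - c = (x - ℓ) - (c - ℓ) by ring, show d - c = (d - ℓ) - (c - ℓ) by ring,
    val_sub' (x - ℓ) (c - ℓ), val_sub' (d - ℓ) (c - ℓ)]

section
variable {n : ℕ} [NeZero n] {r : ZMod n → ZMod n → Prop}

theorem classStep_mem (hr : Equivalence r) (ℓ : ZMod n) :
    0 < classStep n r ℓ ∧ r ℓ (ℓ + (classStep n r ℓ : ZMod n)) := by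
  have : (n : ℕ) ∈ {k : ℕ | 0 < k ∧ r ℓ (ℓ + (k : ZMod n))} := by
    refine ⟨Nat.pos_of_ne_zero (NeZero.ne n), ?_⟩
    simp [hr.refl]
  exact Nat.sInf_mem ⟨n, this⟩

theorem classStep_le (hr : Equivalence r) (ℓ : ZMod n) : classStep n r ℓ ≤ n := by
  apply Nat.sInf_le
  refine ⟨Nat.pos_of_ne_zero (NeZero.ne n), ?_⟩
  simp [hr.refl]

theorem classStep_min (ℓ : ZMod n) {j : ℕ} (h0 : 0 < j) (hj : j < classStep n r ℓ) :
    ¬ r ℓ (ℓ + (j : ZMod n)) := by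
  intro h
  have := Nat.sInf_le (s := {k : ℕ | 0 < k ∧ r ℓ (ℓ + (k : ZMod n))}) ⟨h0, h⟩
  change _ ≤ _ at this
  rw [← classStep] at this
  omega

theorem step_one_or_even (hr : Equivalence r) (ℓ : ZMod n) (hn : 2 ≤ n) (hne : Even n)
    (hpar : Even ((classSucc n r ℓ - ℓ).val) ∨ classSucc n r ℓ = ℓ + 1) :
    classStep n r ℓ = 1 ∨ Even (classStep n r ℓ) := by
  have hle := classStep_le hr ℓ
  have hval : (classSucc n r ℓ - ℓ).val = classStep n r ℓ % n := by
    rw [classSucc, add_sub_cancel_left, ZMod.val_natCast]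
  rcases hpar with h | h
  · rw [hval] at h
    rcases Nat.lt_or_ge (classStep n r ℓ) n with h2 | h2
    · right; rwa [Nat.mod_eq_of_lt h2] at h
    · right; have : classStep n r ℓ = n := le_antisymm hle h2
      rw [this]; exact hne
  · left
    have h1 : ((classStep n r ℓ : ℕ) : ZMod n) = 1 := by
      rw [classSucc] at h
      exact add_left_cancel h
    have hvv := congrArg ZMod.val h1
    rw [ZMod.val_natCast, ZMod.val_one_eq_one_mod, Nat.mod_eq_of_lt (by omega : 1 < n)] at hvv
    have h0 := (classStep_mem hr ℓ).1
    rcases Nat.lt_or_ge (classStep n r ℓ) n with h2 | h2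
    · rwa [Nat.mod_eq_of_lt h2] at hvv
    · exfalso; have heq : classStep n r ℓ = n := le_antisymm hle h2
      rw [heq, Nat.mod_self] at hvv; omega

end

theorem key {n : ℕ} [NeZero n] {r : ZMod n → ZMod n → Prop} (hr : Equivalence r)
    (hn4 : 4 ≤ n) (hne : Even n)
    (hnc : NonCrossing n r)
    (hsplit : ∀ ℓ₀ ℓ₁ : ZMod n, Even ((ℓ₁ - ℓ₀).val) →
      IsUnionOfClasses n r (cyclicInterval n ℓ₀ ℓ₁) →
      IsUnionOfClasses n r (cyclicInterval n (ℓ₁ + 1) (ℓ₀ - 1)) →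
      2 * numClassesIn n r (cyclicInterval n ℓ₀ ℓ₁)
        + pChangesIn n r (cyclicInterval n ℓ₀ ℓ₁) = (ℓ₁ - ℓ₀).val + 2)
    (hpar : ∀ ℓ, Even ((classSucc n r ℓ - ℓ).val) ∨ classSucc n r ℓ = ℓ + 1) :
    ∀ k, Even k → 2 ≤ k → (∃ ℓ, classStep n r ℓ = k) → ∃ ℓ, r ℓ (ℓ + 2) := by
  intro k
  induction k using Nat.strong_induction_on with
  | _ k IH =>
  intro hke hk2 hex
  obtain ⟨ℓ, hstep⟩ := hex
  have hkn : k ≤ n := hstep ▸ classStep_le hr ℓ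
  obtain ⟨a, ha⟩ := hke
  obtain ⟨b, hb⟩ := hne
  -- dispose of k = 2
  rcases eq_or_lt_of_le hk2 with hk2' | hk4'
  · refine ⟨ℓ, ?_⟩
    have h2 := (classStep_mem hr ℓ).2
    rw [hstep, ← hk2'] at h2
    have : ((2 : ℕ) : ZMod n) = (2 : ZMod n) := by push_cast; ring
    rwa [this] at h2
  have hk4 : 4 ≤ k := by omega
  -- position coordinates
  set j : ZMod n → ℕ := fun x => (x - ℓ).val with hjdef
  have hjlt : ∀ x, j x < n := fun x => ZMod.val_lt _
  have hxeq : ∀ x : ZMod n, x = ℓ + ((j x : ℕ) : ZMod n) := by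
    intro x
    have h1 : ((j x : ℕ) : ZMod n) = x - ℓ := by
      simp [hjdef, ZMod.natCast_val, ZMod.cast_id]
    rw [h1]; ring
  have hjc : ∀ m : ℕ, m < n → j (ℓ + (m : ZMod n)) = m := by
    intro m hm
    simp only [hjdef, add_sub_cancel_left, ZMod.val_natCast]
    exact Nat.mod_eq_of_lt hm
  -- k mod n bookkeeping
  obtain ⟨km, hkm, hkmf⟩ : ∃ m, k % n = m ∧ ((m = k ∧ k < n) ∨ (m = 0 ∧ k = n)) := by
    rcases eq_or_lt_of_le hkn with h | h
    · exact ⟨0, by rw [h, Nat.mod_self], Or.inr ⟨rfl, h⟩⟩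
    · exact ⟨k, Nat.mod_eq_of_lt h, Or.inl ⟨rfl, h⟩⟩
  obtain ⟨km1, hkm1, hkm1f⟩ : ∃ m, (k+1) % n = m ∧ ((m = k+1 ∧ k < n) ∨ (m = 1 ∧ k = n)) := by
    rcases eq_or_lt_of_le hkn with h | h
    · refine ⟨1, ?_, Or.inr ⟨rfl, h⟩⟩
      rw [h, Nat.add_mod_left, Nat.mod_eq_of_lt (by omega)]
    · refine ⟨k+1, ?_, Or.inl ⟨rfl, h⟩⟩
      exact Nat.mod_eq_of_lt (by omega)
  -- membership characterizations
  have hmemG : ∀ x, x ∈ cyclicInterval n (ℓ + 1) (ℓ + (k : ZMod n) - 1) ↔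
      1 ≤ j x ∧ j x ≤ k - 1 := by
    intro x
    rw [mem_cyclicInterval_iff ℓ]
    have e0 : (ℓ + 1 - ℓ).val = 1 := by
      rw [add_sub_cancel_left, ZMod.val_one_eq_one_mod, Nat.mod_eq_of_lt (by omega)]
    have e1 : (ℓ + (k : ZMod n) - 1 - ℓ).val = k - 1 := by
      have h1 : ℓ + (k : ZMod n) - 1 - ℓ = ((k - 1 : ℕ) : ZMod n) := by
        push_cast [Nat.cast_sub (show 1 ≤ k by omega)]; ring
      rw [h1, ZMod.val_natCast, Nat.mod_eq_of_lt (by omega)]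
    rw [e0, e1]
    simp only [hjdef]
    have hx := ZMod.val_lt (x - ℓ)
    split_ifs <;> omega
  have hmemG' : ∀ x, x ∈ cyclicInterval n (ℓ + (k : ZMod n) - 1 + 1) (ℓ + 1 - 1) ↔
      (j x = 0 ∨ k ≤ j x) := by
    intro x
    rw [show ℓ + (k : ZMod n) - 1 + 1 = ℓ + (k : ZMod n) by ring,
      show ℓ + 1 - 1 = ℓ by ring, mem_cyclicInterval_iff ℓ]
    have e0 : (ℓ + (k : ZMod n) - ℓ).val = km := by
      rw [add_sub_cancel_left, ZMod.val_natCast, hkm]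
    have e1 : (ℓ - ℓ).val = 0 := by rw [sub_self, ZMod.val_zero]
    rw [e0, e1]
    simp only [hjdef]
    have hx := ZMod.val_lt (x - ℓ)
    split_ifs <;> omega
  have hmemO : ∀ x, x ∈ cyclicInterval n (ℓ + (k : ZMod n) + 1) (ℓ - 1) ↔ km1 ≤ j x := by
    intro x
    rw [mem_cyclicInterval_iff ℓ]
    have e0 : (ℓ + (k : ZMod n) + 1 - ℓ).val = km1 := by
      have h1 : ℓ + (k : ZMod n) + 1 - ℓ = ((k + 1 : ℕ) : ZMod n) := by push_cast; ring
      rw [h1, ZMod.val_natCast, hkm1]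
    have e1 : (ℓ - 1 - ℓ).val = n - 1 := by
      have h1 : ℓ - 1 - ℓ = ((n - 1 : ℕ) : ZMod n) := by
        push_cast [Nat.cast_sub (show 1 ≤ n by omega)]
        simp
      rw [h1, ZMod.val_natCast, Nat.mod_eq_of_lt (by omega)]
    rw [e0, e1]
    simp only [hjdef]
    have hx := ZMod.val_lt (x - ℓ)
    split_ifs <;> omega
  -- the class of ℓ avoids G
  have hnotG : ∀ x, 1 ≤ j x → j x ≤ k - 1 → ¬ r ℓ x := by
    intro x h1 h2 hrx
    have hmin := classStep_min (r := r) ℓ (j := j x) (by omega) (by rw [hstep]; omega)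
    rw [← hxeq x] at hmin
    exact hmin hrx
  have hσ : r ℓ (ℓ + (k : ZMod n)) := by
    have := (classStep_mem hr ℓ).2
    rwa [hstep] at this
  -- G is a union of classes
  have hGU : IsUnionOfClasses n r (cyclicInterval n (ℓ + 1) (ℓ + (k : ZMod n) - 1)) := by
    intro x hx y hxy
    have hx' := (hmemG x).1 hx
    have hnr : ¬ r ℓ x := hnotG x hx'.1 hx'.2
    rcases hnc ℓ (ℓ + (k : ZMod n)) x hσ hnr with h | h
    · exact h hxy
    · have hxO := (hmemO x).1 (h (hr.refl x))
      have hyO := (hmemO y).1 (h hxy)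
      refine (hmemG y).2 ?_
      have := hjlt y
      rcases hkm1f with ⟨e1, e2⟩ | ⟨e1, e2⟩ <;> omega
  -- the complement is a union of classes
  have hG'U : IsUnionOfClasses n r
      (cyclicInterval n (ℓ + (k : ZMod n) - 1 + 1) (ℓ + 1 - 1)) := by
    intro x hx y hxy
    have hx' := (hmemG' x).1 hx
    by_cases hℓx : r ℓ x
    · have hℓy : r ℓ y := hr.trans hℓx hxy
      refine (hmemG' y).2 ?_
      by_contra hcon
      push_neg at hcon
      exact hnotG y (by omega) (by omega) hℓy
    · rcases hnc ℓ (ℓ + (k : ZMod n)) x hσ hℓx with h | h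
      · have hxG := (hmemG x).1 (h (hr.refl x))
        omega
      · have hxO := (hmemO x).1 (h (hr.refl x))
        have hyO := (hmemO y).1 (h hxy)
        refine (hmemG' y).2 ?_
        have := hjlt x
        have := hjlt y
        rcases hkm1f with ⟨e1, e2⟩ | ⟨e1, e2⟩ <;> omega
  -- apply the splitting property
  have hvdiff : (ℓ + (k : ZMod n) - 1 - (ℓ + 1)).val = k - 2 := by
    have h1 : ℓ + (k : ZMod n) - 1 - (ℓ + 1) = ((k - 2 : ℕ) : ZMod n) := by
      push_cast [Nat.cast_sub (show 2 ≤ k by omega)]; ring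
    rw [h1, ZMod.val_natCast, Nat.mod_eq_of_lt (by omega)]
  have hcnt := hsplit (ℓ + 1) (ℓ + (k : ZMod n) - 1)
    (by rw [hvdiff]; exact ⟨a - 1, by omega⟩) hGU hG'U
  rw [hvdiff] at hcnt
  -- case split on whether there is a smaller even step
  by_cases hA : ∃ x, Even (classStep n r x) ∧ classStep n r x < k
  · obtain ⟨x, hxe, hxlt⟩ := hA
    have h2 : 2 ≤ classStep n r x := by
      have := (classStep_mem hr x).1
      rcases hxe with ⟨c, hc⟩; omega
    exact IH _ hxlt hxe h2 ⟨x, rfl⟩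
  push_neg at hA
  have hB : ∀ x, classStep n r x = 1 ∨ (Even (classStep n r x) ∧ k ≤ classStep n r x) := by
    intro x
    rcases step_one_or_even hr x (by omega) ⟨b, hb⟩ (hpar x) with h | h
    · exact Or.inl h
    · exact Or.inr ⟨h, hA x h⟩
  -- odd parity ↔ step = 1
  have hodd : ∀ x : ZMod n, Odd ((classSucc n r x - x).val) ↔ classStep n r x = 1 := by
    intro x
    rw [classSucc, add_sub_cancel_left, ZMod.val_natCast]
    constructor
    · intro h
      rcases hB x with h1 | ⟨he, _⟩
      · exact h1
      · exfalso
        have hle := classStep_le hr x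
        rcases Nat.lt_or_ge (classStep n r x) n with h2 | h2
        · rw [Nat.mod_eq_of_lt h2] at h
          exact (Nat.not_odd_iff_even.2 he) h
        · have heq : classStep n r x = n := le_antisymm hle h2
          rw [heq, Nat.mod_self] at h
          simp at h
    · intro h
      rw [h, Nat.mod_eq_of_lt (by omega)]
      exact odd_one
  -- the set of "maximal" elements
  set G := cyclicInterval n (ℓ + 1) (ℓ + (k : ZMod n) - 1) with hGdef
  set M := {x : ZMod n | x ∈ G ∧ classStep n r x ≠ 1} with hMdef
  have hMsub : M ⊆ G := fun x hx => hx.1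
  -- pChangesIn G = G \ M
  have hPeq : {x : ZMod n | x ∈ G ∧ Odd ((classSucc n r x - x).val)} = G \ M := by
    ext x
    simp only [Set.mem_setOf_eq, Set.mem_diff, hMdef, hodd x]
    tauto
  -- card of G
  have hGcard : G.ncard = k - 1 := by
    have himg : G = (fun i : ℕ => ℓ + ((i + 1 : ℕ) : ZMod n)) '' (Set.Iio (k - 1)) := by
      ext x
      rw [hmemG x]
      constructor
      · rintro ⟨h1, h2⟩
        refine ⟨j x - 1, by simpa using (by omega : j x - 1 < k - 1), ?_⟩
        show ℓ + ((j x - 1 + 1 : ℕ) : ZMod n) = x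
        rw [show j x - 1 + 1 = j x by omega]
        exact (hxeq x).symm
      · rintro ⟨i, hi, rfl⟩
        simp only [Set.mem_Iio] at hi
        show 1 ≤ j (ℓ + ((i + 1 : ℕ) : ZMod n)) ∧ j (ℓ + ((i + 1 : ℕ) : ZMod n)) ≤ k - 1
        rw [hjc (i + 1) (by omega)]
        omega
    rw [himg, Set.ncard_image_of_injOn, ← Finset.coe_range, Set.ncard_coe_finset,
      Finset.card_range]
    intro i hi i' hi' hee
    simp only [Set.mem_Iio] at hi hi'
    have h1 : ((i + 1 : ℕ) : ZMod n) = ((i' + 1 : ℕ) : ZMod n) := add_left_cancel hee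
    have h2 := congrArg ZMod.val h1
    rw [ZMod.val_natCast, ZMod.val_natCast, Nat.mod_eq_of_lt (by omega),
      Nat.mod_eq_of_lt (by omega)] at h2
    omega
  -- classes in G are in bijection with M
  have hMQ : {C : Set (ZMod n) | (∃ x, C = {y | r x y}) ∧ C ⊆ G}
      = (fun x => {y | r x y}) '' M := by
    ext C
    simp only [Set.mem_setOf_eq, Set.mem_image]
    constructor
    · rintro ⟨⟨x₀, rfl⟩, hsub⟩
      obtain ⟨m, hmC, hmax⟩ := Set.exists_max_image {y | r x₀ y} j (Set.toFinite _)
        ⟨x₀, hr.refl x₀⟩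
      have hrm : r x₀ m := hmC
      have hmG := (hmemG m).1 (hsub hmC)
      refine ⟨m, ⟨hsub hmC, ?_⟩, ?_⟩
      · intro h1
        have hm1 : r m (m + 1) := by
          have h2 := (classStep_mem hr m).2
          rw [h1] at h2
          have : ((1 : ℕ) : ZMod n) = (1 : ZMod n) := by push_cast; ring
          rwa [this] at h2
        have hm1C : (m + 1) ∈ {y | r x₀ y} := hr.trans hrm hm1
        have hm1G := (hmemG (m + 1)).1 (hsub hm1C)
        have hjm1 : j (m + 1) = (j m + 1) % n := by
          have h2 : m + 1 = ℓ + ((j m + 1 : ℕ) : ZMod n) := by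
            push_cast
            rw [← add_assoc, ← hxeq m]
          rw [h2, hjdef]
          simp only [add_sub_cancel_left, ZMod.val_natCast]
        have hmax1 := hmax (m + 1) hm1C
        have := hjlt m
        rcases Nat.lt_or_ge (j m + 1) n with h2 | h2
        · rw [Nat.mod_eq_of_lt h2] at hjm1
          omega
        · have : (j m + 1) % n = 0 := by
            have : j m + 1 = n := by omega
            rw [this, Nat.mod_self]
          omega
      · show {y | r m y} = {y | r x₀ y}
        ext y
        simp only [Set.mem_setOf_eq]
        exact ⟨fun h => hr.trans hrm h, fun h => hr.trans (hr.symm hrm) h⟩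
    · rintro ⟨x, ⟨hxG, _⟩, rfl⟩
      exact ⟨⟨x, rfl⟩, fun y hy => hGU x hxG y hy⟩
  have hinj : Set.InjOn (fun x => {y | r x y}) M := by
    have claim : ∀ u v : ZMod n, u ∈ M → v ∈ M → r u v → j u ≤ j v → u = v := by
      intro u v hu hv huv hle
      rcases eq_or_lt_of_le hle with he' | hlt
      · rw [hxeq u, hxeq v, he']
      · exfalso
        have huG := (hmemG u).1 hu.1
        have hvG := (hmemG v).1 hv.1
        have hku : k ≤ classStep n r u := by
          rcases hB u with h | h
          · exact absurd h hu.2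
          · exact h.2
        have hd : v = u + ((j v - j u : ℕ) : ZMod n) := by
          have h1 : ((j v : ℕ) : ZMod n) = v - ℓ := by
            simp [hjdef, ZMod.natCast_val, ZMod.cast_id]
          have h2 : ((j u : ℕ) : ZMod n) = u - ℓ := by
            simp [hjdef, ZMod.natCast_val, ZMod.cast_id]
          rw [Nat.cast_sub hle, h1, h2]
          ring
        have hmin := classStep_min (r := r) u (j := j v - j u) (by omega) (by omega)
        rw [← hd] at hmin
        exact hmin huv
    intro x hx x' hx' he
    have hrxx' : r x x' := by
      have h1 : x' ∈ (fun z => {y | r z y}) x' := hr.refl x'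
      rw [← he] at h1
      exact h1
    rcases le_total (j x) (j x') with h | h
    · exact claim x x' hx hx' hrxx' h
    · exact (claim x' x hx' hx (hr.symm hrxx') h).symm
  have hQcard : numClassesIn n r G = M.ncard := by
    rw [numClassesIn, hMQ, Set.ncard_image_of_injOn hinj]
  have hPcard : pChangesIn n r G = (k - 1) - M.ncard := by
    rw [pChangesIn, hPeq, Set.ncard_diff hMsub, hGcard]
  have hMle : M.ncard ≤ k - 1 := by
    rw [← hGcard]
    exact Set.ncard_le_ncard hMsub (Set.toFinite _)
  rw [hQcard, hPcard] at hcnt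
  have hM1 : M.ncard = 1 := by omega
  have hQ1 : {C : Set (ZMod n) | (∃ x, C = {y | r x y}) ∧ C ⊆ G}.ncard = 1 := by
    rw [hMQ, Set.ncard_image_of_injOn hinj, hM1]
  obtain ⟨C, hC⟩ := Set.ncard_eq_one.mp hQ1
  have hj1 : j (ℓ + 1) = 1 := by
    have : (ℓ + 1) = ℓ + ((1 : ℕ) : ZMod n) := by push_cast; ring
    rw [this, hjc 1 (by omega)]
  have hj3 : j (ℓ + 3) = 3 := by
    have : (ℓ + 3) = ℓ + ((3 : ℕ) : ZMod n) := by push_cast; ring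
    rw [this, hjc 3 (by omega)]
  have h1G : ℓ + 1 ∈ G := (hmemG _).2 (by rw [hj1]; omega)
  have h3G : ℓ + 3 ∈ G := (hmemG _).2 (by rw [hj3]; omega)
  have hC1 : {y | r (ℓ + 1) y} ∈ {C : Set (ZMod n) | (∃ x, C = {y | r x y}) ∧ C ⊆ G} :=
    ⟨⟨ℓ + 1, rfl⟩, fun y hy => hGU _ h1G y hy⟩
  have hC3 : {y | r (ℓ + 3) y} ∈ {C : Set (ZMod n) | (∃ x, C = {y | r x y}) ∧ C ⊆ G} :=
    ⟨⟨ℓ + 3, rfl⟩, fun y hy => hGU _ h3G y hy⟩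
  rw [hC] at hC1 hC3
  have heq13 : {y | r (ℓ + 1) y} = {y | r (ℓ + 3) y} := by
    rw [Set.mem_singleton_iff.mp hC1, Set.mem_singleton_iff.mp hC3]
  have hfin : r (ℓ + 1) (ℓ + 3) := by
    have : (ℓ + 3) ∈ {y | r (ℓ + 1) y} := by
      rw [heq13]
      exact hr.refl _
    exact this
  exact ⟨ℓ + 1, by rwa [show ℓ + 1 + 2 = ℓ + 3 by ring]⟩

/-- For `d > 2` and a non-crossing equivalence relation on `ℤ/(2d-2)`
satisfying the decomposition properties (with `H = ∅`), there exists `ℓ` with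
`ℓ ∼ ℓ + 2`. -/
theorem exists_related_add_two (d : ℕ) (hd : 2 < d)
    (r : ZMod (2*d-2) → ZMod (2*d-2) → Prop) (hr : Equivalence r)
    (hnc : NonCrossing (2*d-2) r) (hdp : DecompositionProperties d r) :
    ∃ ℓ : ZMod (2*d-2), r ℓ (ℓ + 2) := by
  haveI : NeZero (2*d-2) := ⟨by omega⟩
  have hn4 : 4 ≤ 2*d-2 := by omega
  have hne : Even (2*d-2) := ⟨d-1, by omega⟩
  have hsplit : ∀ ℓ₀ ℓ₁ : ZMod (2*d-2), Even ((ℓ₁ - ℓ₀).val) →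
      IsUnionOfClasses (2*d-2) r (cyclicInterval (2*d-2) ℓ₀ ℓ₁) →
      IsUnionOfClasses (2*d-2) r (cyclicInterval (2*d-2) (ℓ₁ + 1) (ℓ₀ - 1)) →
      2 * numClassesIn (2*d-2) r (cyclicInterval (2*d-2) ℓ₀ ℓ₁)
        + pChangesIn (2*d-2) r (cyclicInterval (2*d-2) ℓ₀ ℓ₁) = (ℓ₁ - ℓ₀).val + 2 :=
    fun ℓ₀ ℓ₁ h h0 h1 => (hdp.split ℓ₀ ℓ₁ h h0 h1).1
  have hpar := hdp.parity
  have hkey := key hr hn4 hne hnc hsplit hpar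
  have hstep2 : ∀ x : ZMod (2*d-2), Even (classStep (2*d-2) r x) →
      (∃ ℓ : ZMod (2*d-2), r ℓ (ℓ + 2)) := by
    intro x hx
    refine hkey _ hx ?_ ⟨x, rfl⟩
    have := (classStep_mem hr x).1
    rcases hx with ⟨c, hc⟩
    omega
  rcases step_one_or_even hr (0 : ZMod (2*d-2)) (by omega) hne (hpar 0) with h0 | h0
  · rcases step_one_or_even hr (1 : ZMod (2*d-2)) (by omega) hne (hpar 1) with h1 | h1
    · have a0 := (classStep_mem hr (0 : ZMod (2*d-2))).2
      rw [h0] at a0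
      have a1 := (classStep_mem hr (1 : ZMod (2*d-2))).2
      rw [h1] at a1
      refine ⟨0, ?_⟩
      have h2 : r 0 (1 + 1) := hr.trans (by simpa using a0) (by simpa using a1)
      have : (0 : ZMod (2*d-2)) + 2 = 1 + 1 := by ring
      rwa [this]
    · exact hstep2 1 h1
  · exact hstep2 0 h0
end

section
/- Let d > 2 be an integer and let ∼ be a non-crossing equivalence relation on ℤ/(2d−2) satisfying the decomposition properties (with H = ∅). Then for any basepoint ℓ₀ ∈ ℤ/(2d−2), the basic partition with basepoint ℓ₀ consists of exactly one interval if ℓ₀ ∼ ℓ₀ + 2d − 3 (equivalently ℓ₀ ∼ ℓ₀ − 1), and of exactly two intervals otherwise. -/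
/-- `lastEquiv n r ℓ₀ x`: listing the elements of `ZMod n` in increasing cyclic order
starting at `ℓ₀` as `ℓ₀, ℓ₀+1, …, ℓ₀+(n-1)`, this is the last element of that list
equivalent to `x` under `r`. -/
noncomputable def lastEquiv (n : ℕ) (r : ZMod n → ZMod n → Prop) (ℓ₀ x : ZMod n) :
    ZMod n :=
  ℓ₀ + ((sSup {k : ℕ | k ≤ n - 1 ∧ r x (ℓ₀ + (k : ZMod n))} : ℕ) : ZMod n)

/-- `lastEquivAfter n r ℓ₀ x b`: the last element of the list `ℓ₀, ℓ₀+1, …, ℓ₀+(n-1)`,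
among those occurring strictly after `b`, which is equivalent to `x` under `r`. -/
noncomputable def lastEquivAfter (n : ℕ) (r : ZMod n → ZMod n → Prop) (ℓ₀ x b : ZMod n) :
    ZMod n :=
  ℓ₀ + ((sSup {k : ℕ | (b - ℓ₀).val < k ∧ k ≤ n - 1 ∧ r x (ℓ₀ + (k : ZMod n))} : ℕ) : ZMod n)

set_option linter.unusedSectionVars false
set_option maxHeartbeats 1000000

section Helpers
variable {n : ℕ} [NeZero n]

lemma cast_val_eq (x : ZMod n) : ((x.val : ℕ) : ZMod n) = x := by simp

lemma exists_coord (a x : ZMod n) : ∃ u : ℕ, u < n ∧ x = a + (u : ZMod n) :=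
  ⟨(x - a).val, ZMod.val_lt _, by rw [cast_val_eq]; ring⟩

lemma coord_inj {a : ZMod n} {u v : ℕ} (hu : u < n) (hv : v < n)
    (h : a + (u : ZMod n) = a + (v : ZMod n)) : u = v := by
  have h2 : ((u:ℕ) : ZMod n) = v := by exact add_left_cancel h
  have := congrArg ZMod.val h2
  rwa [ZMod.val_cast_of_lt hu, ZMod.val_cast_of_lt hv] at this

lemma mem_cyc (a : ZMod n) {j t u : ℕ} (hjt : j ≤ t) (ht : t < n) (hu : u < n) :
    (a + (u : ZMod n)) ∈ cyclicInterval n (a + (j : ZMod n)) (a + (t : ZMod n)) ↔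
      j ≤ u ∧ u ≤ t := by
  unfold cyclicInterval
  simp only [Set.mem_setOf_eq]
  have h1 : a + (t : ZMod n) - (a + (j : ZMod n)) = ((t - j : ℕ) : ZMod n) := by
    push_cast [Nat.cast_sub hjt]; ring
  rw [h1, ZMod.val_cast_of_lt (by omega)]
  by_cases hju : j ≤ u
  · have h2 : a + (u : ZMod n) - (a + (j : ZMod n)) = ((u - j : ℕ) : ZMod n) := by
      push_cast [Nat.cast_sub hju]; ring
    rw [h2, ZMod.val_cast_of_lt (by omega)]
    omega
  · have h2 : a + (u : ZMod n) - (a + (j : ZMod n)) = ((n + u - j : ℕ) : ZMod n) := by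
      push_cast [Nat.cast_sub (by omega : j ≤ n + u)]
      simp only [ZMod.natCast_self]
      ring
    rw [h2, ZMod.val_cast_of_lt (by omega)]
    omega

lemma mem_cyc0 (a : ZMod n) {t u : ℕ} (ht : t < n) (hu : u < n) :
    (a + (u : ZMod n)) ∈ cyclicInterval n a (a + (t : ZMod n)) ↔ u ≤ t := by
  have := mem_cyc a (Nat.zero_le t) ht hu
  simpa using this

lemma val_shift (a : ZMod n) {u : ℕ} (hu : u < n) : (a + (u:ZMod n) - a).val = u := by
  have : a + (u:ZMod n) - a = (u : ZMod n) := by ring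
  rw [this, ZMod.val_cast_of_lt hu]

lemma cast_nsub_one : ((n - 1 : ℕ) : ZMod n) = -1 := by
  have h1 : 1 ≤ n := Nat.one_le_iff_ne_zero.mpr (NeZero.ne n)
  push_cast [Nat.cast_sub h1]
  simp

end Helpers

section Count
variable {n : ℕ} [NeZero n] {r : ZMod n → ZMod n → Prop}

lemma pChangesIn_union {A B : Set (ZMod n)} (h : Disjoint A B) :
    pChangesIn n r (A ∪ B) = pChangesIn n r A + pChangesIn n r B := by
  unfold pChangesIn
  have heq : {x : ZMod n | x ∈ A ∪ B ∧ Odd ((classSucc n r x - x).val)}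
      = {x : ZMod n | x ∈ A ∧ Odd ((classSucc n r x - x).val)}
        ∪ {x : ZMod n | x ∈ B ∧ Odd ((classSucc n r x - x).val)} := by
    ext x; simp only [Set.mem_setOf_eq, Set.mem_union]; tauto
  rw [heq, Set.ncard_union_eq]
  exact Set.disjoint_left.mpr fun x hx hx' =>
    Set.disjoint_left.mp h hx.1 hx'.1

lemma numClassesIn_union (hr : Equivalence r) {A B : Set (ZMod n)} (h : Disjoint A B)
    (hA : IsUnionOfClasses n r A) (hB : IsUnionOfClasses n r B) :
    numClassesIn n r (A ∪ B) = numClassesIn n r A + numClassesIn n r B := by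
  unfold numClassesIn
  have heq : {C : Set (ZMod n) | (∃ x, C = {y | r x y}) ∧ C ⊆ A ∪ B}
      = {C : Set (ZMod n) | (∃ x, C = {y | r x y}) ∧ C ⊆ A}
        ∪ {C : Set (ZMod n) | (∃ x, C = {y | r x y}) ∧ C ⊆ B} := by
    ext C
    simp only [Set.mem_setOf_eq, Set.mem_union]
    constructor
    · rintro ⟨⟨x, rfl⟩, hsub⟩
      have hx : x ∈ {y | r x y} := hr.refl x
      rcases hsub hx with hxa | hxb
      · exact Or.inl ⟨⟨x, rfl⟩, fun y hy => hA x hxa y hy⟩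
      · exact Or.inr ⟨⟨x, rfl⟩, fun y hy => hB x hxb y hy⟩
    · rintro (⟨hc, hsub⟩ | ⟨hc, hsub⟩)
      · exact ⟨hc, hsub.trans Set.subset_union_left⟩
      · exact ⟨hc, hsub.trans Set.subset_union_right⟩
  rw [heq, Set.ncard_union_eq]
  rw [Set.disjoint_left]
  rintro C ⟨⟨x, rfl⟩, hsubA⟩ ⟨-, hsubB⟩
  exact Set.disjoint_left.mp h (hsubA (hr.refl x)) (hsubB (hr.refl x))

end Count

section Chunk
variable {n : ℕ} [NeZero n] {r : ZMod n → ZMod n → Prop}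

/-- The main chunk lemma. -/
lemma chunk_main (hn4 : 4 ≤ n) (hnev : Even n)
    (hr : Equivalence r) (hnc : NonCrossing n r)
    (hpar : ∀ ℓ : ZMod n, Even ((classSucc n r ℓ - ℓ).val) ∨ classSucc n r ℓ = ℓ + 1)
    (a : ZMod n) (len : ℕ) (hlen : len < n)
    (hS : IsUnionOfClasses n r (cyclicInterval n a (a + (len : ZMod n))))
    (M : ℕ) (hMdef : M = sSup {k : ℕ | k ≤ len ∧ r a (a + (k : ZMod n))})
    (hM2 : M ≤ n - 2) :
    M ≤ len ∧ r a (a + (M : ZMod n)) ∧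
    (∀ k : ℕ, k ≤ len → r a (a + (k : ZMod n)) → k ≤ M) ∧
    Even M ∧
    IsUnionOfClasses n r (cyclicInterval n a (a + (M : ZMod n))) ∧
    IsUnionOfClasses n r
      (cyclicInterval n (a + ((M+1 : ℕ) : ZMod n)) (a + ((n-1 : ℕ) : ZMod n))) := by
  set K : Set ℕ := {k : ℕ | k ≤ len ∧ r a (a + (k : ZMod n))} with hK
  have hKne : K.Nonempty := ⟨0, by simp [hK], by simpa using hr.refl a⟩
  have hKbdd : BddAbove K := ⟨len, fun k hk => hk.1⟩
  have hMK : M ∈ K := hMdef ▸ Nat.sSup_mem hKne hKbdd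
  have hMlen : M ≤ len := hMK.1
  have hraM : r a (a + (M : ZMod n)) := hMK.2
  have hmax : ∀ k : ℕ, k ≤ len → r a (a + (k : ZMod n)) → k ≤ M :=
    fun k hk hrk => hMdef ▸ le_csSup hKbdd ⟨hk, hrk⟩
  have hMn : M < n := by omega
  -- the class of a is contained in the chunk [a, a+M]
  have hclassA : ∀ y : ZMod n, r a y → y ∈ cyclicInterval n a (a + (M : ZMod n)) := by
    intro y hy
    obtain ⟨u, hu, rfl⟩ := exists_coord a y
    have hyS : a + (u : ZMod n) ∈ cyclicInterval n a (a + (len : ZMod n)) := by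
      have haS : a ∈ cyclicInterval n a (a + (len : ZMod n)) := by
        unfold cyclicInterval; simp
      exact hS a haS _ hy
    have hule : u ≤ len := by
      have := (mem_cyc a (Nat.zero_le len) hlen hu).mp (by simpa using hyS)
      exact this.2
    have huM : u ≤ M := hmax u hule hy
    have := (mem_cyc a (Nat.zero_le M) hMn hu).mpr ⟨Nat.zero_le u, huM⟩
    simpa using this
  -- Even M
  have hevenM : Even M := by
    rcases Nat.eq_zero_or_pos M with h0 | hMpos
    · simp [h0]
    have hstep : classStep n r (a + (M : ZMod n)) = n - M := by
      set e := a + (M : ZMod n) with he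
      set T : Set ℕ := {k : ℕ | 0 < k ∧ r e (e + (k : ZMod n))} with hT
      have hnM : (n - M : ℕ) ∈ T := by
        constructor
        · omega
        · have : e + ((n - M : ℕ) : ZMod n) = a := by
            rw [he]
            have : ((M : ℕ) : ZMod n) + ((n - M : ℕ) : ZMod n) = ((n:ℕ) : ZMod n) := by
              rw [← Nat.cast_add]; congr 1; omega
            rw [add_assoc, this]; simp
          rw [this]
          exact hr.symm hraM
      have hTne : T.Nonempty := ⟨n - M, hnM⟩
      have hk0 : sInf T ∈ T := Nat.sInf_mem hTne
      have hk0le : sInf T ≤ n - M := Nat.sInf_le hnM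
      have : ¬ sInf T < n - M := by
        intro hlt
        set k₀ := sInf T
        have hrk : r e (e + ((k₀ : ℕ) : ZMod n)) := hk0.2
        have hre : r a (a + ((M + k₀ : ℕ) : ZMod n)) := by
          have heq : e + ((k₀ : ℕ) : ZMod n) = a + ((M + k₀ : ℕ) : ZMod n) := by
            rw [he]; push_cast; ring
          exact hr.trans hraM (heq ▸ hrk)
        have hmem := hclassA _ hre
        have hcon : 0 ≤ M + k₀ ∧ M + k₀ ≤ M :=
          (mem_cyc a (Nat.zero_le M) hMn (by omega : M + k₀ < n)).mp (by simpa using hmem)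
        have hpos : 0 < k₀ := hk0.1
        omega
      have : sInf T = n - M := by omega
      simpa [classStep, hT, he] using this
    rcases hpar (a + (M : ZMod n)) with hev | h1
    · have hv : (classSucc n r (a + (M : ZMod n)) - (a + (M : ZMod n))).val = n - M := by
        unfold classSucc
        rw [hstep, val_shift _ (by omega : n - M < n)]
      rw [hv] at hev
      rw [Nat.even_iff] at hev hnev ⊢
      omega
    · exfalso
      unfold classSucc at h1
      rw [hstep] at h1
      have : ((n - M : ℕ) : ZMod n) = ((1 : ℕ) : ZMod n) := by
        have := add_left_cancel h1
        simpa using this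
      have := coord_inj (a := a) (by omega : n - M < n) (by omega : 1 < n)
        (by rw [this])
      omega
  -- chunk is a union of classes
  have hMeven2 : M = 0 ∨ 2 ≤ M := by rcases hevenM with ⟨c, hc⟩; omega
  have hchunkU : IsUnionOfClasses n r (cyclicInterval n a (a + (M : ZMod n))) := by
    intro x hx y hxy
    obtain ⟨u, hu, rfl⟩ := exists_coord a x
    have hux : u ≤ M := ((mem_cyc a (Nat.zero_le M) hMn hu).mp (by simpa using hx)).2
    by_cases hra : r a (a + (u : ZMod n))
    · exact hclassA y (hr.trans hra hxy)
    · rcases hMeven2 with h0 | h2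
      · exfalso
        apply hra
        have : u = 0 := by omega
        subst this
        simpa using hr.refl a
      · rcases hnc a (a + (M : ZMod n)) (a + (u : ZMod n)) hraM hra with hb1 | hb2
        · -- class ⊆ [a+1, a+M-1] ⊆ chunk
          have hy' : y ∈ cyclicInterval n (a + 1) (a + (M : ZMod n) - 1) := hb1 hxy
          have hrw1 : a + 1 = a + ((1:ℕ) : ZMod n) := by push_cast; ring
          have hrw2 : a + (M : ZMod n) - 1 = a + ((M - 1 : ℕ) : ZMod n) := by
            push_cast [Nat.cast_sub (by omega : 1 ≤ M)]; ring
          rw [hrw1, hrw2] at hy'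
          obtain ⟨v, hv, rfl⟩ := exists_coord a y
          have := (mem_cyc a (by omega : 1 ≤ M - 1) (by omega : M - 1 < n) hv).mp hy'
          have := (mem_cyc a (Nat.zero_le M) hMn hv).mpr ⟨Nat.zero_le v, by omega⟩
          simpa using this
        · -- x would be outside chunk, contradiction
          exfalso
          have hx' : a + (u : ZMod n) ∈ cyclicInterval n (a + (M : ZMod n) + 1) (a - 1) :=
            hb2 (hr.refl _)
          have hrw1 : a + (M : ZMod n) + 1 = a + ((M + 1 : ℕ) : ZMod n) := by push_cast; ring
          have hrw2 : a - 1 = a + ((n - 1 : ℕ) : ZMod n) := by rw [cast_nsub_one]; ring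
          rw [hrw1, hrw2] at hx'
          have := (mem_cyc a (by omega : M + 1 ≤ n - 1) (by omega : n - 1 < n) hu).mp hx'
          omega
  -- complement is a union of classes
  have hcomplU : IsUnionOfClasses n r
      (cyclicInterval n (a + ((M+1 : ℕ) : ZMod n)) (a + ((n-1 : ℕ) : ZMod n))) := by
    intro x hx y hxy
    obtain ⟨u, hu, rfl⟩ := exists_coord a x
    have hux : M + 1 ≤ u :=
      ((mem_cyc a (by omega : M + 1 ≤ n - 1) (by omega) hu).mp hx).1
    have hra : ¬ r a (a + (u : ZMod n)) := by
      intro hra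
      have := (mem_cyc a (Nat.zero_le M) hMn hu).mp (by simpa using hclassA _ hra)
      omega
    obtain ⟨v, hv, rfl⟩ := exists_coord a y
    rcases hnc a (a + (M : ZMod n)) (a + (u : ZMod n)) hraM hra with hb1 | hb2
    · rcases hMeven2 with h0 | h2
      · -- M = 0 : [a+1, a-1] is exactly the complement
        have hy' := hb1 hxy
        have hrw1 : a + 1 = a + ((M + 1 : ℕ) : ZMod n) := by rw [h0]; push_cast; ring
        have hrw2 : a + (M : ZMod n) - 1 = a + ((n - 1 : ℕ) : ZMod n) := by
          rw [h0, cast_nsub_one]; push_cast; ring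
        rw [hrw1, hrw2] at hy'
        exact hy'
      · exfalso
        have hx' : a + (u : ZMod n) ∈ cyclicInterval n (a + 1) (a + (M : ZMod n) - 1) :=
          hb1 (hr.refl _)
        have hrw1 : a + 1 = a + ((1:ℕ) : ZMod n) := by push_cast; ring
        have hrw2 : a + (M : ZMod n) - 1 = a + ((M - 1 : ℕ) : ZMod n) := by
          push_cast [Nat.cast_sub (by omega : 1 ≤ M)]; ring
        rw [hrw1, hrw2] at hx'
        have := (mem_cyc a (by omega : 1 ≤ M - 1) (by omega : M - 1 < n) hu).mp hx'
        omega
    · have hy' := hb2 hxy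
      have hrw1 : a + (M : ZMod n) + 1 = a + ((M + 1 : ℕ) : ZMod n) := by push_cast; ring
      have hrw2 : a - 1 = a + ((n - 1 : ℕ) : ZMod n) := by rw [cast_nsub_one]; ring
      rw [hrw1, hrw2] at hy'
      exact hy'
  exact ⟨hMlen, hraM, hmax, hevenM, hchunkU, hcomplU⟩

end Chunk

section LB
variable {n : ℕ} [NeZero n] {r : ZMod n → ZMod n → Prop}

lemma lb (hn4 : 4 ≤ n) (hnev : Even n)
    (hr : Equivalence r) (hnc : NonCrossing n r)
    (hpar : ∀ ℓ : ZMod n, Even ((classSucc n r ℓ - ℓ).val) ∨ classSucc n r ℓ = ℓ + 1)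
    (hsplit : ∀ ℓ₀ ℓ₁ : ZMod n, Even ((ℓ₁ - ℓ₀).val) →
      IsUnionOfClasses n r (cyclicInterval n ℓ₀ ℓ₁) →
      IsUnionOfClasses n r (cyclicInterval n (ℓ₁ + 1) (ℓ₀ - 1)) →
      2 * numClassesIn n r (cyclicInterval n ℓ₀ ℓ₁)
        + pChangesIn n r (cyclicInterval n ℓ₀ ℓ₁) = (ℓ₁ - ℓ₀).val + 2) :
    ∀ L : ℕ, ∀ a : ZMod n, L ≤ n - 2 →
      IsUnionOfClasses n r (cyclicInterval n a (a + (L : ZMod n))) →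
      (L + 2 ≤ 2 * numClassesIn n r (cyclicInterval n a (a + (L : ZMod n)))
          + pChangesIn n r (cyclicInterval n a (a + (L : ZMod n)))) ∧
      (¬ r a (a + (L : ZMod n)) →
        L + 3 ≤ 2 * numClassesIn n r (cyclicInterval n a (a + (L : ZMod n)))
          + pChangesIn n r (cyclicInterval n a (a + (L : ZMod n)))) := by
  intro L
  induction L using Nat.strong_induction_on with
  | _ L IH =>
    intro a hL hS
    have hLn : L < n := by omega
    have hMle : sSup {k : ℕ | k ≤ L ∧ r a (a + (k : ZMod n))} ≤ n - 2 :=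
      le_trans (Nat.sSup_mem (⟨0, by simp, by simpa using hr.refl a⟩ :
          Set.Nonempty {k : ℕ | k ≤ L ∧ r a (a + (k : ZMod n))})
        ⟨L, fun k hk => hk.1⟩).1 hL
    obtain ⟨hMlen, hraM, hmax, hevenM, hchunkU, hcomplU⟩ :=
      chunk_main hn4 hnev hr hnc hpar a L hLn hS
        (sSup {k : ℕ | k ≤ L ∧ r a (a + (k : ZMod n))}) rfl hMle
    generalize hMdef : sSup {k : ℕ | k ≤ L ∧ r a (a + (k : ZMod n))} = M at *
    have hMn : M < n := by omega
    -- the split equality for the chunk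
    have hchunkEq : 2 * numClassesIn n r (cyclicInterval n a (a + (M : ZMod n)))
        + pChangesIn n r (cyclicInterval n a (a + (M : ZMod n))) = M + 2 := by
      have hev : Even ((a + (M : ZMod n) - a).val) := by
        rw [val_shift a hMn]; exact hevenM
      have hco : IsUnionOfClasses n r
          (cyclicInterval n (a + (M : ZMod n) + 1) (a - 1)) := by
        have hrw1 : a + (M : ZMod n) + 1 = a + ((M + 1 : ℕ) : ZMod n) := by push_cast; ring
        have hrw2 : a - 1 = a + ((n - 1 : ℕ) : ZMod n) := by rw [cast_nsub_one]; ring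
        rw [hrw1, hrw2]; exact hcomplU
      have := hsplit a (a + (M : ZMod n)) hev hchunkU hco
      rwa [val_shift a hMn] at this
    by_cases hML : M = L
    · -- the chunk is the whole interval
      subst hML
      refine ⟨by omega, fun hc => absurd hraM hc⟩
    · have hMlt : M < L := lt_of_le_of_ne hMlen hML
      -- the remainder interval R
      set R := cyclicInterval n (a + ((M+1 : ℕ) : ZMod n)) (a + (L : ZMod n)) with hR
      have hRend : a + ((M+1 : ℕ) : ZMod n) + ((L - M - 1 : ℕ) : ZMod n)
          = a + (L : ZMod n) := by
        rw [add_assoc, ← Nat.cast_add]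
        congr 2
        omega
      -- R is a union of classes
      have hRsub : ∀ u : ℕ, u < n →
          (a + (u : ZMod n) ∈ R ↔ M + 1 ≤ u ∧ u ≤ L) := by
        intro u hu
        exact mem_cyc a (by omega : M + 1 ≤ L) hLn hu
      have hRU : IsUnionOfClasses n r R := by
        intro x hx y hxy
        obtain ⟨u, hu, rfl⟩ := exists_coord a x
        have hux := (hRsub u hu).mp hx
        -- x is in the complement interval of the chunk
        have hxc : a + (u : ZMod n) ∈
            cyclicInterval n (a + ((M+1 : ℕ) : ZMod n)) (a + ((n-1 : ℕ) : ZMod n)) :=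
          (mem_cyc a (by omega : M + 1 ≤ n - 1) (by omega) hu).mpr ⟨by omega, by omega⟩
        have hyc := hcomplU _ hxc y hxy
        have hxS : a + (u : ZMod n) ∈ cyclicInterval n a (a + (L : ZMod n)) :=
          (mem_cyc0 a hLn hu).mpr (by omega)
        have hyS := hS _ hxS y hxy
        obtain ⟨v, hv, rfl⟩ := exists_coord a y
        have h1 := (mem_cyc a (by omega : M + 1 ≤ n - 1) (by omega) hv).mp hyc
        have h2 := (mem_cyc0 a hLn hv).mp hyS
        exact (hRsub v hv).mpr ⟨h1.1, h2⟩
      -- apply the induction hypothesis to R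
      have hIH := (IH (L - M - 1) (by omega) (a + ((M+1 : ℕ) : ZMod n)) (by omega)
        (by rw [hRend]; exact hRU)).1
      rw [hRend] at hIH
      rw [← hR] at hIH
      -- additivity
      have hdisj : Disjoint (cyclicInterval n a (a + (M : ZMod n))) R := by
        rw [Set.disjoint_left]
        intro x hx hx'
        obtain ⟨u, hu, rfl⟩ := exists_coord a x
        have h1 := (mem_cyc0 a hMn hu).mp hx
        have h2 := ((hRsub u hu).mp hx').1
        omega
      have hunion : cyclicInterval n a (a + (L : ZMod n))
          = cyclicInterval n a (a + (M : ZMod n)) ∪ R := by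
        ext x
        obtain ⟨u, hu, rfl⟩ := exists_coord a x
        simp only [Set.mem_union]
        rw [hRsub u hu]
        rw [mem_cyc0 a hLn hu, mem_cyc0 a hMn hu]
        omega
      have hq : numClassesIn n r (cyclicInterval n a (a + (L : ZMod n)))
          = numClassesIn n r (cyclicInterval n a (a + (M : ZMod n))) + numClassesIn n r R := by
        rw [hunion]; exact numClassesIn_union hr hdisj hchunkU hRU
      have hp : pChangesIn n r (cyclicInterval n a (a + (L : ZMod n)))
          = pChangesIn n r (cyclicInterval n a (a + (M : ZMod n))) + pChangesIn n r R := by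
        rw [hunion]; exact pChangesIn_union hdisj
      constructor
      · omega
      · intro _; omega

end LB


/-- For `d > 2` and a non-crossing equivalence relation on `ℤ/(2d-2)`
satisfying the decomposition properties (with `H = ∅`), for any basepoint `ℓ₀` the basic
partition with basepoint `ℓ₀` consists of exactly one interval if `ℓ₀ ∼ ℓ₀ + (2d-3)`
(i.e. the first endpoint `ℓ₁` is already the final element of the list), and of exactly
two intervals otherwise (i.e. `ℓ₁` is not the final element, but the second endpoint
`ℓ₂` — the last element after `ℓ₁` equivalent to `ℓ₁ + 1` — is the final element). -/
theorem basic_partition_two_intervals (d : ℕ) (hd : 2 < d)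
    (r : ZMod (2*d-2) → ZMod (2*d-2) → Prop) (hr : Equivalence r)
    (hnc : NonCrossing (2*d-2) r) (hdp : DecompositionProperties d r)
    (ℓ₀ : ZMod (2*d-2)) :
    (r ℓ₀ (ℓ₀ + ((2*d-3 : ℕ) : ZMod (2*d-2))) →
      lastEquiv (2*d-2) r ℓ₀ ℓ₀ = ℓ₀ + ((2*d-3 : ℕ) : ZMod (2*d-2))) ∧
    (¬ r ℓ₀ (ℓ₀ + ((2*d-3 : ℕ) : ZMod (2*d-2))) →
      lastEquiv (2*d-2) r ℓ₀ ℓ₀ ≠ ℓ₀ + ((2*d-3 : ℕ) : ZMod (2*d-2)) ∧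
      lastEquivAfter (2*d-2) r ℓ₀ (lastEquiv (2*d-2) r ℓ₀ ℓ₀ + 1)
          (lastEquiv (2*d-2) r ℓ₀ ℓ₀)
        = ℓ₀ + ((2*d-3 : ℕ) : ZMod (2*d-2))) := by

  haveI : NeZero (2*d-2) := ⟨by omega⟩
  have hn4 : 4 ≤ 2*d-2 := by omega
  have hnev : Even (2*d-2) := ⟨d-1, by omega⟩
  have hcast : ((2*d-3 : ℕ) : ZMod (2*d-2)) = (((2*d-2) - 1 : ℕ) : ZMod (2*d-2)) := by
    have h23 : (2*d-3 : ℕ) = (2*d-2) - 1 := by omega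
    rw [h23]
  set K : Set ℕ := {k : ℕ | k ≤ (2*d-2) - 1 ∧ r ℓ₀ (ℓ₀ + (k : ZMod (2*d-2)))} with hK
  have hKbdd : BddAbove K := ⟨(2*d-2) - 1, fun k hk => hk.1⟩
  have hKne : K.Nonempty := ⟨0, by simp [hK], by simpa using hr.refl ℓ₀⟩
  have hLE : lastEquiv (2*d-2) r ℓ₀ ℓ₀ = ℓ₀ + ((sSup K : ℕ) : ZMod (2*d-2)) := rfl
  constructor
  · -- case 1 : r ℓ₀ (ℓ₀ + (2d-3))
    intro h
    have h' : r ℓ₀ (ℓ₀ + (((2*d-2) - 1 : ℕ) : ZMod (2*d-2))) := by rw [← hcast]; exact h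
    have hmem : (2*d-2) - 1 ∈ K := ⟨le_rfl, h'⟩
    have hsup : sSup K = (2*d-2) - 1 :=
      le_antisymm (csSup_le hKne fun k hk => hk.1) (le_csSup hKbdd hmem)
    rw [hLE, hsup, hcast]
  · -- case 2 : ¬ r ℓ₀ (ℓ₀ + (2d-3))
    intro h
    set m := sSup K with hmdef
    have hmK : m ∈ K := Nat.sSup_mem hKne hKbdd
    have hmle : m ≤ (2*d-2) - 1 := hmK.1
    have hrm : r ℓ₀ (ℓ₀ + (m : ZMod (2*d-2))) := hmK.2
    have hmne : m ≠ (2*d-2) - 1 := by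
      intro heq
      apply h
      rw [hcast, ← heq]
      exact hrm
    have hm2 : m ≤ (2*d-2) - 2 := by omega
    -- the big interval [ℓ₀, ℓ₀ + (n-1)] is all of ZMod n, hence a union of classes
    have hS : IsUnionOfClasses (2*d-2) r
        (cyclicInterval (2*d-2) ℓ₀ (ℓ₀ + (((2*d-2) - 1 : ℕ) : ZMod (2*d-2)))) := by
      intro x _ y _
      obtain ⟨v, hv, rfl⟩ := exists_coord ℓ₀ y
      exact (mem_cyc0 ℓ₀ (by omega) hv).mpr (by omega)
    obtain ⟨hMlen, hraM, hmax, hevenM, hchunkU, hcomplU⟩ :=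
      chunk_main hn4 hnev hr hnc hdp.parity ℓ₀ ((2*d-2) - 1) (by omega) hS m hmdef hm2
    -- the split equality for the complement interval I₁
    have hrw1 : ℓ₀ + ((m : ℕ) : ZMod (2*d-2)) + 1 = ℓ₀ + ((m + 1 : ℕ) : ZMod (2*d-2)) := by
      push_cast; ring
    have hrw2 : ℓ₀ - 1 = ℓ₀ + (((2*d-2) - 1 : ℕ) : ZMod (2*d-2)) := by
      rw [cast_nsub_one]; ring
    have hmlt : m < 2*d-2 := by omega
    have hsplit := hdp.split ℓ₀ (ℓ₀ + ((m : ℕ) : ZMod (2*d-2)))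
      (by rw [val_shift ℓ₀ hmlt]; exact hevenM) hchunkU
      (by rw [hrw1, hrw2]; exact hcomplU)
    have eqI1 : 2 * numClassesIn (2*d-2) r
          (cyclicInterval (2*d-2) (ℓ₀ + ((m + 1 : ℕ) : ZMod (2*d-2)))
            (ℓ₀ + (((2*d-2) - 1 : ℕ) : ZMod (2*d-2))))
        + pChangesIn (2*d-2) r
          (cyclicInterval (2*d-2) (ℓ₀ + ((m + 1 : ℕ) : ZMod (2*d-2)))
            (ℓ₀ + (((2*d-2) - 1 : ℕ) : ZMod (2*d-2))))
        = (2*d-2) - m := by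
      have := hsplit.2
      rw [hrw1, hrw2, val_shift ℓ₀ hmlt] at this
      exact this
    -- the key claim : ℓ₁ + 1 is equivalent to ℓ₀ - 1
    have hB : r (ℓ₀ + ((m : ℕ) : ZMod (2*d-2)) + 1)
        (ℓ₀ + (((2*d-2) - 1 : ℕ) : ZMod (2*d-2))) := by
      by_contra hB
      have hEnd : ℓ₀ + ((m + 1 : ℕ) : ZMod (2*d-2))
          + (((2*d-2) - m - 2 : ℕ) : ZMod (2*d-2))
          = ℓ₀ + (((2*d-2) - 1 : ℕ) : ZMod (2*d-2)) := by
        rw [add_assoc, ← Nat.cast_add]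
        congr 2
        omega
      have hlb := (lb hn4 hnev hr hnc hdp.parity
        (fun a b hev h1 h2 => (hdp.split a b hev h1 h2).1)
        ((2*d-2) - m - 2) (ℓ₀ + ((m + 1 : ℕ) : ZMod (2*d-2))) (by omega)
        (by rw [hEnd]; exact hcomplU)).2
        (by rw [hEnd, ← hrw1]; exact hB)
      rw [hEnd] at hlb
      rw [eqI1] at hlb
      omega
    refine ⟨?_, ?_⟩
    · rw [hLE, hcast]
      intro heq
      exact hmne (coord_inj (by omega) (by omega) heq)
    · rw [hLE]
      unfold lastEquivAfter
      rw [hcast]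
      congr 1
      have hval : (ℓ₀ + ((m : ℕ) : ZMod (2*d-2)) - ℓ₀).val = m := val_shift ℓ₀ hmlt
      set A : Set ℕ := {k : ℕ | (ℓ₀ + ((m : ℕ) : ZMod (2*d-2)) - ℓ₀).val < k ∧
        k ≤ (2*d-2) - 1 ∧ r (ℓ₀ + ((m : ℕ) : ZMod (2*d-2)) + 1)
          (ℓ₀ + (k : ZMod (2*d-2)))} with hA
    -- show the sup of A is (2d-2)-1
      have hmemA : (2*d-2) - 1 ∈ A := by
        refine ⟨?_, le_rfl, hB⟩
        rw [hval]; omega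
      have hAbdd : BddAbove A := ⟨(2*d-2) - 1, fun k hk => hk.2.1⟩
      have hsupA : sSup A = (2*d-2) - 1 :=
        le_antisymm (csSup_le ⟨_, hmemA⟩ fun k hk => hk.2.1) (le_csSup hAbdd hmemA)
      rw [hsupA]
end

section
/- Let d > 2 be an integer and let ∼ be a non-crossing equivalence relation on ℤ/(2d−2) satisfying the decomposition properties (with H = ∅). If an equivalence class [ℓ] of ∼ is contained in the cyclic interval [ℓ₀, ℓ₁] and both ℓ₀ and ℓ₁ belong to [ℓ], then ℓ₀ − 1 ∼ ℓ₁ + 1. -/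
variable {n : ℕ} [NeZero n]


lemma zmod_val_sub_cases (u v : ZMod n) :
    (u - v).val = if v.val ≤ u.val then u.val - v.val else u.val + n - v.val := by
  rcases eq_or_ne v 0 with rfl | hv
  · simp [ZMod.val_zero]
  · have hvval : 0 < v.val := by
      rcases Nat.eq_zero_or_pos v.val with h | h
      · exact absurd ((ZMod.val_eq_zero v).mp h) hv
      · exact h
    have h1 : u - v = u + (-v) := by ring
    rw [h1, ZMod.val_add, ZMod.neg_val, if_neg hv]
    have hu := ZMod.val_lt u
    have hv' := ZMod.val_lt v
    rcases le_or_gt v.val u.val with h | h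
    · rw [if_pos h]
      have e : u.val + (n - v.val) = (u.val - v.val) + n := by omega
      rw [e, Nat.add_mod_right, Nat.mod_eq_of_lt (by omega)]
    · rw [if_neg (by omega), Nat.mod_eq_of_lt (by omega)]
      omega

lemma zmod_natCast_val_self (u : ZMod n) : ((u.val : ℕ) : ZMod n) = u := by
  simp [ZMod.natCast_val, ZMod.cast_id]

lemma mem_cyc_base (z : ZMod n) {c c' : ℕ} (hc : c ≤ c') (hc' : c' < n) (x : ZMod n) :
    x ∈ cyclicInterval n (z + (c : ZMod n)) (z + (c' : ZMod n)) ↔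
      c ≤ (x - z).val ∧ (x - z).val ≤ c' := by
  have h1 : x - (z + (c : ZMod n)) = (x - z) - (c : ZMod n) := by ring
  have h2 : (z + (c' : ZMod n)) - (z + (c : ZMod n)) = (c' : ZMod n) - (c : ZMod n) := by ring
  have hcv : ((c : ZMod n)).val = c := ZMod.val_cast_of_lt (by omega)
  have hc'v : ((c' : ZMod n)).val = c' := ZMod.val_cast_of_lt hc'
  show (x - (z + (c : ZMod n))).val ≤ _ ↔ _
  rw [h1, h2, zmod_val_sub_cases (x - z) (c : ZMod n),
    zmod_val_sub_cases ((c' : ZMod n)) ((c : ZMod n)), hcv, hc'v]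
  have := ZMod.val_lt (x - z)
  split_ifs with h h' h' <;> omega


lemma cast_sub_nat (hn : 0 < n) {j : ℕ} (hj : j ≤ n) :
    ((n - j : ℕ) : ZMod n) = -(j : ZMod n) := by
  have : ((n - j : ℕ) : ZMod n) = ((n : ℕ) : ZMod n) - (j : ZMod n) := by
    push_cast [hj]; ring
  rw [this, ZMod.natCast_self, zero_sub]

lemma compl_cyc (hn : 2 ≤ n) {α β : ZMod n} (h : (β - α).val ≤ n - 2) :
    cyclicInterval n (β + 1) (α - 1) = (cyclicInterval n α β)ᶜ := by
  have hn0 : 0 < n := by omega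
  set t := (β - α).val with ht
  have htc : ((t : ℕ) : ZMod n) = β - α := zmod_natCast_val_self _
  have h1 : β + 1 = α + ((t + 1 : ℕ) : ZMod n) := by push_cast [htc]; ring
  have h2 : α - 1 = α + ((n - 1 : ℕ) : ZMod n) := by
    rw [cast_sub_nat hn0 (by omega)]; push_cast; ring
  have h3 : β = α + ((t : ℕ) : ZMod n) := by rw [htc]; ring
  have h4 : α = α + ((0 : ℕ) : ZMod n) := by push_cast; ring
  ext x
  rw [h1, h2, Set.mem_compl_iff]
  rw [mem_cyc_base α (by omega : t + 1 ≤ n - 1) (by omega) x]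
  have hmem : x ∈ cyclicInterval n α β ↔ (x - α).val ≤ t := Iff.rfl
  rw [hmem]
  have := ZMod.val_lt (x - α)
  omega

lemma classSucc_spec (r : ZMod n → ZMod n → Prop) (x : ZMod n) (s : ℕ) (hs0 : 0 < s)
    (hrs : r x (x + (s : ZMod n)))
    (hmin : ∀ j, 0 < j → j < s → ¬ r x (x + (j : ZMod n))) :
    classSucc n r x = x + (s : ZMod n) ∧ classStep n r x = s := by
  have hmem : s ∈ {k : ℕ | 0 < k ∧ r x (x + (k : ZMod n))} := ⟨hs0, hrs⟩
  have h1 : classStep n r x = s := by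
    have hle := Nat.sInf_le hmem
    have hin := Nat.sInf_mem (⟨s, hmem⟩ : Set.Nonempty _)
    rcases lt_or_eq_of_le hle with h | h
    · exact absurd hin.2 (hmin _ hin.1 h)
    · exact h
  exact ⟨by rw [classSucc, h1], h1⟩

lemma counts_add (r : ZMod n → ZMod n → Prop) (hr : Equivalence r) {S₁ S₂ : Set (ZMod n)}
    (h1 : IsUnionOfClasses n r S₁) (h2 : IsUnionOfClasses n r S₂) (hd : Disjoint S₁ S₂) :
    numClassesIn n r (S₁ ∪ S₂) = numClassesIn n r S₁ + numClassesIn n r S₂ ∧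
    pChangesIn n r (S₁ ∪ S₂) = pChangesIn n r S₁ + pChangesIn n r S₂ := by
  constructor
  · unfold numClassesIn
    have hset : {C : Set (ZMod n) | (∃ x, C = {y | r x y}) ∧ C ⊆ S₁ ∪ S₂} =
        {C | (∃ x, C = {y | r x y}) ∧ C ⊆ S₁} ∪ {C | (∃ x, C = {y | r x y}) ∧ C ⊆ S₂} := by
      ext C
      constructor
      · rintro ⟨⟨x, rfl⟩, hsub⟩
        have hx : x ∈ {y | r x y} := hr.refl x
        rcases hsub hx with h | h
        · exact Or.inl ⟨⟨x, rfl⟩, fun y hy => h1 x h y hy⟩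
        · exact Or.inr ⟨⟨x, rfl⟩, fun y hy => h2 x h y hy⟩
      · rintro (⟨he, hs⟩ | ⟨he, hs⟩)
        · exact ⟨he, hs.trans Set.subset_union_left⟩
        · exact ⟨he, hs.trans Set.subset_union_right⟩
    rw [hset, Set.ncard_union_eq ?_ (Set.toFinite _) (Set.toFinite _)]
    rw [Set.disjoint_left]
    rintro C ⟨⟨x, rfl⟩, hs1⟩ ⟨_, hs2⟩
    exact (hd.ne_of_mem (hs1 (hr.refl x)) (hs2 (hr.refl x))) rfl
  · unfold pChangesIn
    have hset : {x : ZMod n | x ∈ S₁ ∪ S₂ ∧ Odd ((classSucc n r x - x).val)} =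
        {x | x ∈ S₁ ∧ Odd ((classSucc n r x - x).val)} ∪
        {x | x ∈ S₂ ∧ Odd ((classSucc n r x - x).val)} := by
      ext x
      simp only [Set.mem_setOf_eq, Set.mem_union]
      tauto
    rw [hset, Set.ncard_union_eq ?_ (Set.toFinite _) (Set.toFinite _)]
    rw [Set.disjoint_left]
    rintro x ⟨hx1, -⟩ ⟨hx2, -⟩
    exact (hd.ne_of_mem hx1 hx2) rfl

lemma union_compl {r : ZMod n → ZMod n → Prop} (hr : Equivalence r) {S : Set (ZMod n)}
    (h : IsUnionOfClasses n r S) : IsUnionOfClasses n r Sᶜ :=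
  fun x hx y hy hyS => hx (h y hyS x (hr.symm hy))

lemma union_inter {r : ZMod n → ZMod n → Prop} {S T : Set (ZMod n)}
    (h1 : IsUnionOfClasses n r S) (h2 : IsUnionOfClasses n r T) :
    IsUnionOfClasses n r (S ∩ T) :=
  fun x hx y hy => ⟨h1 x hx.1 y hy, h2 x hx.2 y hy⟩

lemma union_union {r : ZMod n → ZMod n → Prop} {S T : Set (ZMod n)}
    (h1 : IsUnionOfClasses n r S) (h2 : IsUnionOfClasses n r T) :
    IsUnionOfClasses n r (S ∪ T) := by
  rintro x (hx | hx) y hy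
  · exact Or.inl (h1 x hx y hy)
  · exact Or.inr (h2 x hx y hy)

lemma mem_cyc_char {n : ℕ} [NeZero n] {z α β : ZMod n} {cα cβ : ℕ}
    (hα : α = z + (cα : ZMod n)) (hβ : β = z + (cβ : ZMod n))
    (h1 : cα ≤ cβ) (h2 : cβ < n) (x : ZMod n) :
    x ∈ cyclicInterval n α β ↔ cα ≤ (x - z).val ∧ (x - z).val ≤ cβ := by
  subst hα hβ
  exact mem_cyc_base z h1 h2 x

lemma diff_off {n : ℕ} [NeZero n] {z α β : ZMod n} {cα cβ : ℕ}
    (hα : α = z + (cα : ZMod n)) (hβ : β = z + (cβ : ZMod n))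
    (h1 : cα ≤ cβ) (h2 : cβ < n) : (β - α).val = cβ - cα := by
  subst hα hβ
  rw [show z + (cβ : ZMod n) - (z + (cα : ZMod n)) = ((cβ : ZMod n) - (cα : ZMod n)) by ring,
    ← Nat.cast_sub h1]
  exact ZMod.val_cast_of_lt (by omega)

lemma main_aux {n : ℕ} [NeZero n] (hn4 : 4 ≤ n) (hneven : Even n)
    (r : ZMod n → ZMod n → Prop) (hr : Equivalence r) (hnc : NonCrossing n r)
    (hsplit : ∀ a b : ZMod n, Even ((b - a).val) →
      IsUnionOfClasses n r (cyclicInterval n a b) →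
      IsUnionOfClasses n r (cyclicInterval n (b + 1) (a - 1)) →
      2 * numClassesIn n r (cyclicInterval n a b) + pChangesIn n r (cyclicInterval n a b)
          = (b - a).val + 2 ∧
      2 * numClassesIn n r (cyclicInterval n (b + 1) (a - 1))
          + pChangesIn n r (cyclicInterval n (b + 1) (a - 1)) = n - (b - a).val)
    (hparity : ∀ ℓ : ZMod n, Even ((classSucc n r ℓ - ℓ).val) ∨ classSucc n r ℓ = ℓ + 1)
    (ℓ₀ ℓ₁ : ZMod n) (h01 : r ℓ₀ ℓ₁)
    (hsub : {y : ZMod n | r ℓ₀ y} ⊆ cyclicInterval n ℓ₀ ℓ₁) :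
    r (ℓ₀ - 1) (ℓ₁ + 1) := by
  have hn0 : 0 < n := by omega
  have hn2 : 2 ≤ n := by omega
  have hv1 : (1 : ZMod n).val = 1 := by
    rw [← Nat.cast_one, ZMod.val_cast_of_lt (by omega)]
  by_cases hdeg : ℓ₁ + 1 = ℓ₀
  · have e1 : ℓ₀ - 1 = ℓ₁ := by rw [← hdeg]; ring
    rw [e1, hdeg]
    exact hr.symm h01
  by_cases hzw : ℓ₀ - 1 = ℓ₁ + 1
  · rw [hzw]; exact hr.refl _
  set k := (ℓ₁ - ℓ₀).val with hkdef
  have hkn : k < n := ZMod.val_lt _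
  have hcastk : ((k : ℕ) : ZMod n) = ℓ₁ - ℓ₀ := zmod_natCast_val_self _
  have hl1 : ℓ₁ = ℓ₀ + (k : ZMod n) := by rw [hcastk]; ring
  have hk2 : k ≤ n - 2 := by
    by_contra hcon
    have hk1 : k = n - 1 := by omega
    apply hdeg
    have e : ((k : ℕ) : ZMod n) + 1 = 0 := by
      rw [hk1, cast_sub_nat hn0 (by omega)]
      push_cast
      ring
    rw [hl1]
    calc ℓ₀ + (k : ZMod n) + 1 = ℓ₀ + ((k : ZMod n) + 1) := by ring
      _ = ℓ₀ := by rw [e, add_zero]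
  have hpt : ∀ x : ZMod n, x = (ℓ₁+1) + (((x - (ℓ₁+1)).val : ℕ) : ZMod n) := by
    intro x
    rw [zmod_natCast_val_self]
    ring
  have hvlt : ∀ x : ZMod n, (x - (ℓ₁+1)).val < n := fun x => ZMod.val_lt _
  have hw : ℓ₀ - 1 = (ℓ₁+1) + ((n - (k+2) : ℕ) : ZMod n) := by
    rw [cast_sub_nat hn0 (by omega), hl1]
    push_cast
    ring
  have hl0 : ℓ₀ = (ℓ₁+1) + ((n - (k+1) : ℕ) : ZMod n) := by
    rw [cast_sub_nat hn0 (by omega), hl1]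
    push_cast
    ring
  have hl1z : ℓ₁ = (ℓ₁+1) + ((n - 1 : ℕ) : ZMod n) := by
    rw [cast_sub_nat hn0 (by omega)]
    push_cast
    ring
  have hz0 : ℓ₁ + 1 = (ℓ₁+1) + ((0 : ℕ) : ZMod n) := by push_cast; ring
  have hPw : ((ℓ₀ - 1) - (ℓ₁+1)).val = n - (k+2) :=
    diff_off (cα := 0) (cβ := n - (k+2)) hz0 hw (by omega) (by omega)
  have hnk2 : 1 ≤ n - (k+2) := by
    rcases Nat.eq_zero_or_pos (n - (k+2)) with h | h
    · exfalso
      apply hzw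
      rw [hw, h]
      push_cast
      ring
    · exact h
  have hI0 : ∀ x : ZMod n, x ∈ cyclicInterval n ℓ₀ ℓ₁ ↔
      n - (k+1) ≤ (x - (ℓ₁+1)).val ∧ (x - (ℓ₁+1)).val ≤ n - 1 :=
    fun x => mem_cyc_char hl0 hl1z (by omega) (by omega) x
  have hI1 : ∀ x : ZMod n, x ∈ cyclicInterval n (ℓ₁+1) (ℓ₀-1) ↔
      (x - (ℓ₁+1)).val ≤ n - (k+2) := by
    intro x
    rw [mem_cyc_char hz0 hw (by omega) (by omega) x]
    omega
  -- positions of the class of ℓ₀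
  have hsubP : ∀ y : ZMod n, r ℓ₀ y →
      n - (k+1) ≤ (y - (ℓ₁+1)).val ∧ (y - (ℓ₁+1)).val ≤ n - 1 := by
    intro y hy
    exact (hI0 y).mp (hsub hy)
  -- k is even
  have hkeven : Even k := by
    rcases Nat.eq_zero_or_pos k with hk0 | hk0
    · simp [hk0]
    have hstep : classSucc n r ℓ₁ = ℓ₁ + ((n - k : ℕ) : ZMod n) := by
      apply (classSucc_spec r ℓ₁ (n - k) (by omega) ?_ ?_).1
      · have e : ℓ₁ + ((n - k : ℕ) : ZMod n) = ℓ₀ := by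
          rw [cast_sub_nat hn0 (by omega), hl1]
          ring
        rw [e]
        exact hr.symm h01
      · intro j hj0 hjs hrj
        have h1 : r ℓ₀ (ℓ₁ + (j : ZMod n)) := hr.trans h01 hrj
        have h2 : ℓ₁ + (j : ZMod n) = (ℓ₁+1) + ((j - 1 : ℕ) : ZMod n) := by
          push_cast [Nat.cast_sub (by omega : 1 ≤ j)]
          ring
        have h3 : ((ℓ₁ + (j : ZMod n)) - (ℓ₁+1)).val = j - 1 := by
          have := diff_off (cα := 0) (cβ := j - 1) hz0 h2 (by omega) (by omega)
          omega
        have := (hsubP _ h1).1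
        omega
    rcases hparity ℓ₁ with h | h
    · rw [hstep] at h
      have e : ℓ₁ + ((n - k : ℕ) : ZMod n) - ℓ₁ = ((n - k : ℕ) : ZMod n) := by ring
      rw [e, ZMod.val_cast_of_lt (by omega)] at h
      rcases hneven with ⟨t, ht⟩
      rcases h with ⟨t', ht'⟩
      exact ⟨t - t', by omega⟩
    · exfalso
      rw [hstep] at h
      have e : ((n - k : ℕ) : ZMod n) = 1 := by
        have := add_left_cancel h
        exact this
      have : ((n - k : ℕ) : ZMod n).val = (1 : ZMod n).val := by rw [e]
      rw [ZMod.val_cast_of_lt (by omega), hv1] at this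
      omega

  have hU0 : IsUnionOfClasses n r (cyclicInterval n ℓ₀ ℓ₁) := by
    intro x hx y hy
    by_cases hx0 : r ℓ₀ x
    · exact hsub (hr.trans hx0 hy)
    · rcases hnc ℓ₀ ℓ₁ x h01 hx0 with h | h
      · rcases Nat.eq_zero_or_pos k with hk0 | hk0
        · exfalso
          apply hx0
          have hx1 : (x - (ℓ₁+1)).val = n - 1 := by
            have := (hI0 x).mp hx
            omega
          have hxl : x = ℓ₁ := by rw [hpt x, hx1, ← hl1z]
          rw [hxl]
          exact h01
        · have hk2' : 2 ≤ k := by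
            rcases hkeven with ⟨t, ht⟩
            omega
          have hle : ℓ₀ + 1 = (ℓ₁+1) + ((n - k : ℕ) : ZMod n) := by
            rw [cast_sub_nat hn0 (by omega), hl1]
            push_cast
            ring
          have hre : ℓ₁ - 1 = (ℓ₁+1) + ((n - 2 : ℕ) : ZMod n) := by
            rw [cast_sub_nat hn0 (by omega)]
            push_cast
            ring
          have hy' := h hy
          rw [mem_cyc_char hle hre (by omega) (by omega) y] at hy'
          rw [hI0]
          omega
      · exfalso
        have hx' := h (hr.refl x)
        rw [hI1] at hx'
        have := (hI0 x).mp hx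
        omega
  have hU1 : IsUnionOfClasses n r (cyclicInterval n (ℓ₁+1) (ℓ₀-1)) := by
    rw [compl_cyc hn2 (by omega : (ℓ₁ - ℓ₀).val ≤ n - 2)]
    exact union_compl hr hU0
  have hoff : ∀ c : ℕ, c < n → (((ℓ₁+1) + (c : ZMod n)) - (ℓ₁+1)).val = c := by
    intro c hc
    rw [show (ℓ₁+1) + (c : ZMod n) - (ℓ₁+1) = (c : ZMod n) by ring]
    exact ZMod.val_cast_of_lt hc
  have hwI1 : (ℓ₀-1) ∈ cyclicInterval n (ℓ₁+1) (ℓ₀-1) := by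
    rw [hI1, hPw]
  have hzI1 : (ℓ₁+1) ∈ cyclicInterval n (ℓ₁+1) (ℓ₀-1) := by
    rw [hI1]
    have h0 : ((ℓ₁+1) - (ℓ₁+1)).val = 0 := by simp
    omega
  -- suppose the conclusion fails
  by_contra hcon
  have hconz : ¬ r (ℓ₁+1) (ℓ₀-1) := fun h => hcon (hr.symm h)
  -- the maximal element of the class of ℓ₁ + 1
  have hSA_ne : {v : ℕ | v < n ∧ r (ℓ₁+1) ((ℓ₁+1) + (v : ZMod n))}.Nonempty := by
    refine ⟨0, by omega, ?_⟩
    push_cast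
    rw [add_zero]
    exact hr.refl _
  have hSA_bdd : BddAbove {v : ℕ | v < n ∧ r (ℓ₁+1) ((ℓ₁+1) + (v : ZMod n))} :=
    ⟨n, fun v hv => le_of_lt hv.1⟩
  set a := sSup {v : ℕ | v < n ∧ r (ℓ₁+1) ((ℓ₁+1) + (v : ZMod n))} with hadef
  have hamem := Nat.sSup_mem hSA_ne hSA_bdd
  have haA : a < n := hamem.1
  have hram : r (ℓ₁+1) ((ℓ₁+1) + (a : ZMod n)) := hamem.2
  have haub : ∀ y, r (ℓ₁+1) y → (y - (ℓ₁+1)).val ≤ a := by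
    intro y hy
    apply le_csSup hSA_bdd
    exact ⟨hvlt y, by rw [← hpt y]; exact hy⟩
  have hCsubI1 : ∀ y, r (ℓ₁+1) y → (y - (ℓ₁+1)).val ≤ n - (k+2) := by
    intro y hy
    have := hU1 (ℓ₁+1) hzI1 y hy
    rwa [hI1] at this
  have han : a ≤ n - (k+2) := by
    have := hCsubI1 _ hram
    rwa [hoff a haA] at this
  -- the minimal element of the class of ℓ₀ - 1
  have hSB_ne : {v : ℕ | v < n ∧ r (ℓ₀-1) ((ℓ₁+1) + (v : ZMod n))}.Nonempty := by
    refine ⟨n - (k+2), by omega, ?_⟩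
    rw [← hw]
    exact hr.refl _
  set b' := sInf {v : ℕ | v < n ∧ r (ℓ₀-1) ((ℓ₁+1) + (v : ZMod n))} with hbdef
  have hbmem := Nat.sInf_mem hSB_ne
  have hbB : b' < n := hbmem.1
  have hrbm : r (ℓ₀-1) ((ℓ₁+1) + (b' : ZMod n)) := hbmem.2
  have hblb : ∀ y, r (ℓ₀-1) y → b' ≤ (y - (ℓ₁+1)).val := by
    intro y hy
    apply Nat.sInf_le
    exact ⟨hvlt y, by rw [← hpt y]; exact hy⟩
  have hC'subI1 : ∀ y, r (ℓ₀-1) y → (y - (ℓ₁+1)).val ≤ n - (k+2) := by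
    intro y hy
    have := hU1 (ℓ₀-1) hwI1 y hy
    rwa [hI1] at this
  have hbn : b' ≤ n - (k+2) := by
    have := hblb _ (hr.refl (ℓ₀-1))
    omega
  have hb1 : 1 ≤ b' := by
    rcases Nat.eq_zero_or_pos b' with h0 | h
    · exfalso
      apply hcon
      have e : (ℓ₁+1) + ((b' : ℕ) : ZMod n) = ℓ₁+1 := by rw [h0]; push_cast; ring
      rw [← e]
      exact hrbm
    · exact h
  -- a is even
  have haeven : Even a := by
    rcases Nat.eq_zero_or_pos a with ha0 | ha0
    · simp [ha0]
    have hstep : classSucc n r ((ℓ₁+1) + (a : ZMod n))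
        = ((ℓ₁+1) + (a : ZMod n)) + ((n - a : ℕ) : ZMod n) := by
      apply (classSucc_spec r _ (n - a) (by omega) ?_ ?_).1
      · have e : ((ℓ₁+1) + (a : ZMod n)) + ((n - a : ℕ) : ZMod n) = ℓ₁+1 := by
          rw [cast_sub_nat hn0 (by omega)]
          ring
        rw [e]
        exact hr.symm hram
      · intro j hj0 hjs hrj
        have h1 : r (ℓ₁+1) (((ℓ₁+1) + (a : ZMod n)) + (j : ZMod n)) := hr.trans hram hrj
        have h2 : ((ℓ₁+1) + (a : ZMod n)) + (j : ZMod n) = (ℓ₁+1) + ((a + j : ℕ) : ZMod n) := by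
          push_cast
          ring
        have h3 := haub _ h1
        rw [h2, hoff (a+j) (by omega)] at h3
        omega
    rcases hparity ((ℓ₁+1) + (a : ZMod n)) with h | h
    · rw [hstep] at h
      have e : ((ℓ₁+1) + (a : ZMod n)) + ((n - a : ℕ) : ZMod n) - ((ℓ₁+1) + (a : ZMod n))
          = ((n - a : ℕ) : ZMod n) := by ring
      rw [e, ZMod.val_cast_of_lt (by omega)] at h
      rcases hneven with ⟨t, ht⟩
      rcases h with ⟨t', ht'⟩
      exact ⟨t - t', by omega⟩
    · exfalso
      rw [hstep] at h
      have e := add_left_cancel h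
      have hvv : ((n - a : ℕ) : ZMod n).val = (1 : ZMod n).val := by rw [e]
      rw [ZMod.val_cast_of_lt (by omega), hv1] at hvv
      omega
  -- b' is even
  have hbeven : Even b' := by
    by_cases hmw : (ℓ₁+1) + (b' : ZMod n) = ℓ₀ - 1
    · have hb'eq : b' = n - (k+2) := by
        have h1 := hoff b' hbB
        rw [hmw, hPw] at h1
        omega
      rcases hneven with ⟨t, ht⟩
      rcases hkeven with ⟨t', ht'⟩
      rw [hb'eq]
      exact ⟨t - t' - 1, by omega⟩
    · have hbn' : b' < n - (k+2) := by
        rcases Nat.lt_or_ge b' (n - (k+2)) with h | h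
        · exact h
        · exfalso
          apply hmw
          have e : b' = n - (k+2) := by omega
          rw [e, ← hw]
      have hstep : classSucc n r (ℓ₀-1) = (ℓ₀-1) + ((b' + k + 2 : ℕ) : ZMod n) := by
        apply (classSucc_spec r _ (b' + k + 2) (by omega) ?_ ?_).1
        · have e : (ℓ₀-1) + ((b' + k + 2 : ℕ) : ZMod n) = (ℓ₁+1) + (b' : ZMod n) := by
            rw [hw, cast_sub_nat hn0 (by omega)]
            push_cast
            ring
          rw [e]
          exact hrbm
        · intro j hj0 hjs hrj
          rcases Nat.lt_or_ge j (k+2) with hjk | hjk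
          · have h2 : (ℓ₀-1) + (j : ZMod n) = (ℓ₁+1) + ((n - (k+2) + j : ℕ) : ZMod n) := by
              rw [hw]
              push_cast
              ring
            have h3 := hC'subI1 _ hrj
            rw [h2, hoff _ (by omega)] at h3
            omega
          · have h2 : (ℓ₀-1) + (j : ZMod n) = (ℓ₁+1) + ((j - (k+2) : ℕ) : ZMod n) := by
              rw [hw]
              push_cast [Nat.cast_sub (by omega : k+2 ≤ n), Nat.cast_sub (by omega : k+2 ≤ j), ZMod.natCast_self]
              ring
            have h3 := hblb _ hrj
            rw [h2, hoff _ (by omega)] at h3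
            omega
      rcases hparity (ℓ₀-1) with h | h
      · rw [hstep] at h
        have e : (ℓ₀-1) + ((b' + k + 2 : ℕ) : ZMod n) - (ℓ₀-1) = ((b' + k + 2 : ℕ) : ZMod n) := by
          ring
        rw [e, ZMod.val_cast_of_lt (by omega)] at h
        rcases hkeven with ⟨t, ht⟩
        rcases h with ⟨t', ht'⟩
        exact ⟨t' - t - 1, by omega⟩
      · exfalso
        rw [hstep] at h
        have e := add_left_cancel h
        have hvv : ((b' + k + 2 : ℕ) : ZMod n).val = (1 : ZMod n).val := by rw [e]
        rw [ZMod.val_cast_of_lt (by omega), hv1] at hvv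
        omega
  -- the class of ℓ₁+1 lies strictly before the class of ℓ₀-1
  have hab : a + 2 ≤ b' := by
    have hab1 : a + 1 ≤ b' := by
      rcases Nat.eq_zero_or_pos a with ha0 | ha0
      · omega
      · have ha2 : 2 ≤ a := by
          rcases haeven with ⟨t, ht⟩
          omega
        rcases hnc (ℓ₁+1) ((ℓ₁+1) + (a : ZMod n)) (ℓ₀-1) hram hconz with h | h
        · exfalso
          have hwc := h (hr.refl (ℓ₀-1))
          have he1 : (ℓ₁+1) + 1 = (ℓ₁+1) + ((1 : ℕ) : ZMod n) := by push_cast; ring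
          have he2 : ((ℓ₁+1) + (a : ZMod n)) - 1 = (ℓ₁+1) + ((a - 1 : ℕ) : ZMod n) := by
            push_cast [Nat.cast_sub (by omega : 1 ≤ a)]
            ring
          rw [mem_cyc_char he1 he2 (by omega) (by omega) _] at hwc
          rw [hPw] at hwc
          omega
        · have hmc := h hrbm
          have he1 : ((ℓ₁+1) + (a : ZMod n)) + 1 = (ℓ₁+1) + ((a + 1 : ℕ) : ZMod n) := by
            push_cast
            ring
          have he2 : (ℓ₁+1) - 1 = (ℓ₁+1) + ((n - 1 : ℕ) : ZMod n) := by
            rw [cast_sub_nat hn0 (by omega)]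
            push_cast
            ring
          rw [mem_cyc_char he1 he2 (by omega) (by omega) _] at hmc
          rw [hoff b' hbB] at hmc
          omega
    rcases haeven with ⟨t, ht⟩
    rcases hbeven with ⟨t', ht'⟩
    omega

  -- endpoint normal forms
  have hem1 : ((ℓ₁+1) + (a : ZMod n)) + 1 = (ℓ₁+1) + ((a + 1 : ℕ) : ZMod n) := by
    push_cast
    ring
  have hem'1 : ((ℓ₁+1) + (b' : ZMod n)) - 1 = (ℓ₁+1) + ((b' - 1 : ℕ) : ZMod n) := by
    push_cast [Nat.cast_sub (hb1 : 1 ≤ b')]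
    ring
  have hem'p1 : ((ℓ₁+1) + (b' : ZMod n)) + 1 = (ℓ₁+1) + ((b' + 1 : ℕ) : ZMod n) := by
    push_cast
    ring
  have hewm1 : (ℓ₀-1) - 1 = (ℓ₁+1) + ((n - (k+2) - 1 : ℕ) : ZMod n) := by
    rw [hw]
    push_cast [Nat.cast_sub (hnk2 : 1 ≤ n - (k+2))]
    ring
  -- characterizations of A, M, B
  have hA : ∀ x : ZMod n, x ∈ cyclicInterval n (ℓ₁+1) ((ℓ₁+1) + (a : ZMod n)) ↔
      0 ≤ (x - (ℓ₁+1)).val ∧ (x - (ℓ₁+1)).val ≤ a :=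
    fun x => mem_cyc_char hz0 rfl (Nat.zero_le a) haA x
  have hB : ∀ x : ZMod n, x ∈ cyclicInterval n ((ℓ₁+1) + (b' : ZMod n)) (ℓ₀-1) ↔
      b' ≤ (x - (ℓ₁+1)).val ∧ (x - (ℓ₁+1)).val ≤ n - (k+2) :=
    fun x => mem_cyc_char rfl hw hbn (by omega) x
  have hM : ∀ x : ZMod n,
      x ∈ cyclicInterval n (((ℓ₁+1) + (a : ZMod n)) + 1) (((ℓ₁+1) + (b' : ZMod n)) - 1) ↔
      a + 1 ≤ (x - (ℓ₁+1)).val ∧ (x - (ℓ₁+1)).val ≤ b' - 1 :=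
    fun x => mem_cyc_char hem1 hem'1 (by omega) (by omega) x
  -- complements
  have hAc : cyclicInterval n (((ℓ₁+1) + (a : ZMod n)) + 1) ((ℓ₁+1) - 1)
      = (cyclicInterval n (ℓ₁+1) ((ℓ₁+1) + (a : ZMod n)))ᶜ := by
    apply compl_cyc hn2
    rw [hoff a haA]
    omega
  have hPwm' : ((ℓ₀-1) - ((ℓ₁+1) + (b' : ZMod n))).val = n - (k+2) - b' :=
    diff_off (cα := b') (cβ := n - (k+2)) rfl hw hbn (by omega)
  have hBc : cyclicInterval n ((ℓ₀-1) + 1) (((ℓ₁+1) + (b' : ZMod n)) - 1)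
      = (cyclicInterval n ((ℓ₁+1) + (b' : ZMod n)) (ℓ₀-1))ᶜ := by
    apply compl_cyc hn2
    rw [hPwm']
    omega
  have hPmm' : ((((ℓ₁+1) + (b' : ZMod n)) - 1) - (((ℓ₁+1) + (a : ZMod n)) + 1)).val
      = b' - 1 - (a + 1) :=
    diff_off hem1 hem'1 (by omega) (by omega)
  have hMc : cyclicInterval n ((((ℓ₁+1) + (b' : ZMod n)) - 1) + 1)
        ((((ℓ₁+1) + (a : ZMod n)) + 1) - 1)
      = (cyclicInterval n (((ℓ₁+1) + (a : ZMod n)) + 1) (((ℓ₁+1) + (b' : ZMod n)) - 1))ᶜ := by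
    apply compl_cyc hn2
    rw [hPmm']
    omega
  -- A is a union of classes
  have hUA : IsUnionOfClasses n r (cyclicInterval n (ℓ₁+1) ((ℓ₁+1) + (a : ZMod n))) := by
    intro x hx y hy
    by_cases hzx : r (ℓ₁+1) x
    · rw [hA]
      exact ⟨Nat.zero_le _, haub y (hr.trans hzx hy)⟩
    · rcases hnc (ℓ₁+1) ((ℓ₁+1) + (a : ZMod n)) x hram hzx with h | h
      · rcases Nat.eq_zero_or_pos a with ha0 | ha0
        · exfalso
          apply hzx
          have hx1 : (x - (ℓ₁+1)).val = 0 := by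
            have := (hA x).mp hx
            omega
          have hxz : x = ℓ₁+1 := by
            rw [hpt x, hx1]
            push_cast
            ring
          rw [hxz]
          exact hr.refl _
        · have ha2 : 2 ≤ a := by
            rcases haeven with ⟨t, ht⟩
            omega
          have hez1 : (ℓ₁+1) + 1 = (ℓ₁+1) + ((1 : ℕ) : ZMod n) := by push_cast; ring
          have hemm1 : ((ℓ₁+1) + (a : ZMod n)) - 1 = (ℓ₁+1) + ((a - 1 : ℕ) : ZMod n) := by
            push_cast [Nat.cast_sub (by omega : 1 ≤ a)]
            ring
          have hy' := h hy
          rw [mem_cyc_char hez1 hemm1 (by omega) (by omega) y] at hy'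
          rw [hA]
          exact ⟨Nat.zero_le _, by omega⟩
      · exfalso
        have hx' := h (hr.refl x)
        rw [hAc] at hx'
        exact hx' hx
  -- B is a union of classes
  have hUB : IsUnionOfClasses n r (cyclicInterval n ((ℓ₁+1) + (b' : ZMod n)) (ℓ₀-1)) := by
    intro x hx y hy
    by_cases hwx : r (ℓ₀-1) x
    · rw [hB]
      exact ⟨hblb y (hr.trans hwx hy), hC'subI1 y (hr.trans hwx hy)⟩
    · have hrm'w : r ((ℓ₁+1) + (b' : ZMod n)) (ℓ₀-1) := hr.symm hrbm
      have hnm'x : ¬ r ((ℓ₁+1) + (b' : ZMod n)) x := fun h' => hwx (hr.trans hrbm h')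
      rcases hnc ((ℓ₁+1) + (b' : ZMod n)) (ℓ₀-1) x hrm'w hnm'x with h | h
      · by_cases hmw : b' = n - (k+2)
        · exfalso
          apply hwx
          have hx1 : (x - (ℓ₁+1)).val = n - (k+2) := by
            have := (hB x).mp hx
            omega
          have hxw : x = ℓ₀-1 := by rw [hpt x, hx1, ← hw]
          rw [hxw]
          exact hr.refl _
        · have hb2 : b' + 2 ≤ n - (k+2) := by
            rcases hneven with ⟨t, ht⟩
            rcases hkeven with ⟨t', ht'⟩
            rcases hbeven with ⟨t'', ht''⟩
            omega
          have hy' := h hy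
          rw [mem_cyc_char hem'p1 hewm1 (by omega) (by omega) y] at hy'
          rw [hB]
          omega
      · exfalso
        have hx' := h (hr.refl x)
        rw [hBc] at hx'
        exact hx' hx
  -- M is a union of classes
  have hMeq : cyclicInterval n (((ℓ₁+1) + (a : ZMod n)) + 1) (((ℓ₁+1) + (b' : ZMod n)) - 1)
      = cyclicInterval n (ℓ₁+1) (ℓ₀-1)
        ∩ (cyclicInterval n (ℓ₁+1) ((ℓ₁+1) + (a : ZMod n)))ᶜ
        ∩ (cyclicInterval n ((ℓ₁+1) + (b' : ZMod n)) (ℓ₀-1))ᶜ := by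
    ext x
    simp only [Set.mem_inter_iff, Set.mem_compl_iff]
    rw [hI1 x, hA x, hB x, hM x]
    have := hvlt x
    omega
  have hUM : IsUnionOfClasses n r
      (cyclicInterval n (((ℓ₁+1) + (a : ZMod n)) + 1) (((ℓ₁+1) + (b' : ZMod n)) - 1)) := by
    rw [hMeq]
    exact union_inter (union_inter hU1 (union_compl hr hUA)) (union_compl hr hUB)
  -- apply the splitting property four times
  obtain ⟨-, hs1⟩ := hsplit ℓ₀ ℓ₁ hkeven hU0 hU1
  have heva : Even ((((ℓ₁+1) + (a : ZMod n)) - (ℓ₁+1)).val) := by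
    rw [hoff a haA]
    exact haeven
  obtain ⟨hs2, -⟩ := hsplit (ℓ₁+1) ((ℓ₁+1) + (a : ZMod n)) heva hUA
    (by rw [hAc]; exact union_compl hr hUA)
  rw [hoff a haA] at hs2
  have hevb : Even (((ℓ₀-1) - ((ℓ₁+1) + (b' : ZMod n))).val) := by
    rw [hPwm']
    rcases hneven with ⟨t, ht⟩
    rcases hkeven with ⟨t', ht'⟩
    rcases hbeven with ⟨t'', ht''⟩
    exact ⟨t - t' - 1 - t'', by omega⟩
  obtain ⟨hs3, -⟩ := hsplit ((ℓ₁+1) + (b' : ZMod n)) (ℓ₀-1) hevb hUB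
    (by rw [hBc]; exact union_compl hr hUB)
  rw [hPwm'] at hs3
  have hevm : Even (((((ℓ₁+1) + (b' : ZMod n)) - 1) - (((ℓ₁+1) + (a : ZMod n)) + 1)).val) := by
    rw [hPmm']
    rcases haeven with ⟨t, ht⟩
    rcases hbeven with ⟨t', ht'⟩
    exact ⟨t' - t - 1, by omega⟩
  obtain ⟨hs4, -⟩ := hsplit (((ℓ₁+1) + (a : ZMod n)) + 1) (((ℓ₁+1) + (b' : ZMod n)) - 1)
    hevm hUM (by rw [hMc]; exact union_compl hr hUM)
  rw [hPmm'] at hs4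
  -- decompose I₁ into A ∪ (M ∪ B)
  have hI1eq : cyclicInterval n (ℓ₁+1) (ℓ₀-1) =
      cyclicInterval n (ℓ₁+1) ((ℓ₁+1) + (a : ZMod n)) ∪
      (cyclicInterval n (((ℓ₁+1) + (a : ZMod n)) + 1) (((ℓ₁+1) + (b' : ZMod n)) - 1) ∪
       cyclicInterval n ((ℓ₁+1) + (b' : ZMod n)) (ℓ₀-1)) := by
    ext x
    simp only [Set.mem_union]
    rw [hI1 x, hA x, hM x, hB x]
    have := hvlt x
    omega
  have hd2 : Disjoint
      (cyclicInterval n (((ℓ₁+1) + (a : ZMod n)) + 1) (((ℓ₁+1) + (b' : ZMod n)) - 1))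
      (cyclicInterval n ((ℓ₁+1) + (b' : ZMod n)) (ℓ₀-1)) := by
    rw [Set.disjoint_left]
    intro x hx hx'
    rw [hM x] at hx
    rw [hB x] at hx'
    omega
  have hd1 : Disjoint (cyclicInterval n (ℓ₁+1) ((ℓ₁+1) + (a : ZMod n)))
      (cyclicInterval n (((ℓ₁+1) + (a : ZMod n)) + 1) (((ℓ₁+1) + (b' : ZMod n)) - 1) ∪
       cyclicInterval n ((ℓ₁+1) + (b' : ZMod n)) (ℓ₀-1)) := by
    rw [Set.disjoint_left]
    intro x hx hx'
    rw [hA x] at hx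
    rcases hx' with h | h
    · rw [hM x] at h
      omega
    · rw [hB x] at h
      omega
  have hcadd1 := counts_add r hr hUA (union_union hUM hUB) hd1
  have hcadd2 := counts_add r hr hUM hUB hd2
  rw [hI1eq, hcadd1.1, hcadd1.2, hcadd2.1, hcadd2.2] at hs1
  omega


/-- For `d > 2` and a non-crossing equivalence relation on `ℤ/(2d-2)`
satisfying the decomposition properties (with `H = ∅`): if an equivalence class is
contained in the cyclic interval `[ℓ₀, ℓ₁]` with `ℓ₀` and `ℓ₁` both in that class,
then `ℓ₀ - 1 ∼ ℓ₁ + 1`. -/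
theorem related_of_class_in_interval (d : ℕ) (hd : 2 < d)
    (r : ZMod (2*d-2) → ZMod (2*d-2) → Prop) (hr : Equivalence r)
    (hnc : NonCrossing (2*d-2) r) (hdp : DecompositionProperties d r)
    (ℓ₀ ℓ₁ : ZMod (2*d-2)) (h01 : r ℓ₀ ℓ₁)
    (hsub : {y : ZMod (2*d-2) | r ℓ₀ y} ⊆ cyclicInterval (2*d-2) ℓ₀ ℓ₁) :
    r (ℓ₀ - 1) (ℓ₁ + 1) := by
  haveI : NeZero (2*d-2) := ⟨by omega⟩
  exact main_aux (by omega) ⟨d - 1, by omega⟩ r hr hnc hdp.split hdp.parity ℓ₀ ℓ₁ h01 hsub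
end

section
/- Let c ∈ ℝ and let f be holomorphic on the half-plane {z ∈ ℂ : Im z < c} with |f'(z) − 1| < 1/4 and |f(z) − (z + 1)| < 1/4 for all z there. Define h₁ : (0,1) × (−∞, c) → ℂ by h₁(x, y) = (1 − x)·(iy) + x·f(iy). Then h₁ is injective and continuous, hence a homeomorphism onto its image h₁((0,1) × (−∞, c)) ⊆ ℂ. -/
/-- `h₁(x, y) = (1 - x)·(iy) + x·f(iy)`: for fixed `y`, the parameterization of the
straight line segment from `iy` to `f(iy)`. -/
noncomputable def hOne (f : ℂ → ℂ) (q : ℝ × ℝ) : ℂ :=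
  (1 - (q.1 : ℂ)) * ((q.2 : ℂ) * Complex.I) + (q.1 : ℂ) * f ((q.2 : ℂ) * Complex.I)

/-!
Write `h₁(x, y) = iy + x·w(y)` with `w(y) = f(iy) - iy`. By the hypotheses, `w` stays within
`1/4` of `1`, and by the mean value theorem applied to `f - id` it is `1/4`-Lipschitz. Hence
`h₁(q) - h₁(p)` is the vector `Δx + iΔy` perturbed by at most `(|Δx| + |Δy|)/4`, so `h₁` is
`2`-anti-Lipschitz on the strip: it is injective and its inverse on the image is continuous.
-/

open Complex Set

theorem AntilipschitzWith.exists_homeomorph_image {α β : Type*} [MetricSpace α]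
    [PseudoMetricSpace β] {K : NNReal} {f : α → β} {s : Set α}
    (hf : AntilipschitzWith K (s.domRestrict f)) (hc : ContinuousOn f s) :
    ∃ e : s ≃ₜ f '' s, ∀ q : s, (e q : β) = f q :=
  ⟨(hf.isEmbedding hc.domRestrict).toHomeomorph.trans (.setCongr (range_domRestrict f s)),
    fun _ => rfl⟩

theorem norm_sub_sub_le_of_norm_deriv_sub_one_le {𝕜 : Type*} [RCLike 𝕜] {f : 𝕜 → 𝕜}
    {s : Set 𝕜} {C : ℝ} (hs : Convex ℝ s) (hf : ∀ z ∈ s, DifferentiableAt 𝕜 f z)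
    (hder : ∀ z ∈ s, ‖deriv f z - 1‖ ≤ C) {z₁ z₂ : 𝕜} (hz₁ : z₁ ∈ s) (hz₂ : z₂ ∈ s) :
    ‖(f z₂ - z₂) - (f z₁ - z₁)‖ ≤ C * ‖z₂ - z₁‖ := by
  refine hs.norm_image_sub_le_of_norm_deriv_le (fun z hz => (hf z hz).sub differentiableAt_id)
    (fun z hz => ?_) hz₁ hz₂
  rw [deriv_sub (hf z hz) differentiableAt_id, deriv_id]
  exact hder z hz

theorem one_sub_sub_mul_dist_le_dist_mul_I_add_mul {w : ℝ → ℂ} {ε L x₁ x₂ y₁ y₂ : ℝ}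
    (hL : 0 ≤ L) (hx₁ : |x₁| ≤ 1) (hw₂ : ‖w y₂ - 1‖ ≤ ε)
    (hw : ‖w y₂ - w y₁‖ ≤ L * |y₂ - y₁|) :
    (1 - ε - L) * dist (x₁, y₁) (x₂, y₂) ≤
      dist ((y₁ : ℂ) * I + x₁ * w y₁) ((y₂ : ℂ) * I + x₂ * w y₂) := by
  set M := dist (x₁, y₁) (x₂, y₂)
  set Z : ℂ := ((x₂ - x₁ : ℝ) : ℂ) + ((y₂ - y₁ : ℝ) : ℂ) * I
  have hx : |x₂ - x₁| ≤ M := by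
    rw [abs_sub_comm]; exact (Real.dist_eq _ _).ge.trans (le_max_left _ _)
  have hy : |y₂ - y₁| ≤ M := by
    rw [abs_sub_comm]; exact (Real.dist_eq _ _).ge.trans (le_max_right _ _)
  have hMZ : M ≤ ‖Z‖ := max_le
    (by simpa [Z, Real.dist_eq, abs_sub_comm] using abs_re_le_norm Z)
    (by simpa [Z, Real.dist_eq, abs_sub_comm] using abs_im_le_norm Z)
  have hZ : Z = ((y₂ : ℂ) * I + x₂ * w y₂ - ((y₁ : ℂ) * I + x₁ * w y₁))
      - ((x₂ - x₁ : ℝ) : ℂ) * (w y₂ - 1) - x₁ * (w y₂ - w y₁) := by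
    push_cast [Z]; ring
  have h₁ : ‖((x₂ - x₁ : ℝ) : ℂ) * (w y₂ - 1)‖ ≤ ε * M := by
    rw [norm_mul, norm_real, Real.norm_eq_abs, mul_comm]
    exact mul_le_mul hw₂ hx (abs_nonneg _) ((norm_nonneg _).trans hw₂)
  have h₂ : ‖(x₁ : ℂ) * (w y₂ - w y₁)‖ ≤ L * M := by
    rw [norm_mul, norm_real, Real.norm_eq_abs]
    calc |x₁| * ‖w y₂ - w y₁‖ ≤ 1 * (L * |y₂ - y₁|) :=
          mul_le_mul hx₁ hw (norm_nonneg _) zero_le_one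
      _ ≤ L * M := by rw [one_mul]; exact mul_le_mul_of_nonneg_left hy hL
  have hZle :
      ‖Z‖ ≤ dist ((y₁ : ℂ) * I + x₁ * w y₁) ((y₂ : ℂ) * I + x₂ * w y₂) + ε * M + L * M := by
    rw [dist_comm, dist_eq, hZ]
    exact (norm_sub_le _ _).trans (add_le_add ((norm_sub_le _ _).trans (by gcongr)) h₂)
  linarith

theorem hOne_eq (f : ℂ → ℂ) (q : ℝ × ℝ) :
    hOne f q = (q.2 : ℂ) * I + q.1 * (f (q.2 * I) - q.2 * I) := by
  rw [hOne]; ring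

theorem continuousOn_hOne {c : ℝ} {f : ℂ → ℂ} (hf : ContinuousOn f {z : ℂ | z.im < c}) :
    ContinuousOn (hOne f) {q : ℝ × ℝ | q.2 < c} := by
  have hline : Continuous fun q : ℝ × ℝ => (q.2 : ℂ) * I := by fun_prop
  have hfline : ContinuousOn (fun q : ℝ × ℝ => f (q.2 * I)) {q : ℝ × ℝ | q.2 < c} :=
    hf.comp hline.continuousOn fun q hq => by simpa using hq
  unfold hOne
  exact ((continuous_const.sub (by fun_prop)).mul hline).continuousOn.add
    ((by fun_prop : Continuous fun q : ℝ × ℝ => (q.1 : ℂ)).continuousOn.mul hfline)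

theorem antilipschitzWith_domRestrict_hOne {c : ℝ} {f : ℂ → ℂ}
    (hf : DifferentiableOn ℂ f {z : ℂ | z.im < c})
    (hder : ∀ z : ℂ, z.im < c → ‖deriv f z - 1‖ ≤ 1/4)
    (hval : ∀ z : ℂ, z.im < c → ‖f z - (z + 1)‖ ≤ 1/4) :
    AntilipschitzWith 2 ((Ioo (0:ℝ) 1 ×ˢ Iio c).domRestrict (hOne f)) := by
  refine AntilipschitzWith.of_le_mul_dist fun ⟨⟨x₁, y₁⟩, hx₁, hy₁⟩ ⟨⟨x₂, y₂⟩, hx₂, hy₂⟩ => ?_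
  have hmem : ∀ y : ℝ, y ∈ Iio c → (y : ℂ) * I ∈ {z : ℂ | z.im < c} := fun y hy => by
    simpa using hy
  have hlip := norm_sub_sub_le_of_norm_deriv_sub_one_le (convex_halfSpace_im_lt c)
    (fun z hz => hf.differentiableAt ((isOpen_lt continuous_im continuous_const).mem_nhds hz))
    hder (hmem y₁ hy₁) (hmem y₂ hy₂)
  have hnear : ‖(f (y₂ * I) - y₂ * I) - 1‖ ≤ 1/4 := by
    rw [sub_sub]; exact hval _ (hmem y₂ hy₂)
  rw [← sub_mul, norm_mul, norm_I, mul_one, ← ofReal_sub, norm_real, Real.norm_eq_abs] at hlip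
  have hest := one_sub_sub_mul_dist_le_dist_mul_I_add_mul
    (w := fun y : ℝ => f (y * I) - y * I) (x₂ := x₂) (by norm_num)
    (abs_le.2 ⟨by linarith [hx₁.1], hx₁.2.le⟩) hnear hlip
  simp only [Subtype.dist_eq, domRestrict_apply, hOne_eq, NNReal.coe_ofNat]
  linarith

/-- Let `f` be holomorphic on `{Im z < c}` with `|f'(z) - 1| < 1/4`
and `|f(z) - (z+1)| < 1/4` there. Then `h₁(x, y) = (1-x)·(iy) + x·f(iy)` is injective
and continuous on `(0,1) × (-∞, c)`, hence a homeomorphism onto its image. -/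
theorem hOne_injective_continuous_homeomorph (c : ℝ) (f : ℂ → ℂ)
    (hf : DifferentiableOn ℂ f {z : ℂ | z.im < c})
    (hder : ∀ z : ℂ, z.im < c → ‖deriv f z - 1‖ < 1/4)
    (hval : ∀ z : ℂ, z.im < c → ‖f z - (z + 1)‖ < 1/4) :
    Set.InjOn (hOne f) (Set.Ioo (0:ℝ) 1 ×ˢ Set.Iio c) ∧
    ContinuousOn (hOne f) (Set.Ioo (0:ℝ) 1 ×ˢ Set.Iio c) ∧
    ∃ e : (Set.Ioo (0:ℝ) 1 ×ˢ Set.Iio c : Set (ℝ × ℝ)) ≃ₜ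
        (hOne f '' (Set.Ioo (0:ℝ) 1 ×ˢ Set.Iio c) : Set ℂ),
      ∀ q : (Set.Ioo (0:ℝ) 1 ×ˢ Set.Iio c : Set (ℝ × ℝ)), (e q : ℂ) = hOne f q := by
  have hanti := antilipschitzWith_domRestrict_hOne hf (fun z hz => (hder z hz).le)
    fun z hz => (hval z hz).le
  have hcont : ContinuousOn (hOne f) (Ioo (0:ℝ) 1 ×ˢ Iio c) :=
    (continuousOn_hOne hf.continuousOn).mono fun q hq => hq.2
  exact ⟨injOn_iff_injective.2 hanti.injective, hcont, hanti.exists_homeomorph_image hcont⟩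
end

section
/- Let P be a polynomial with complex coefficients, and let γ : ℝ → ℂ be a nonconstant solution of the differential equation γ'(t) = P(γ(t)) which is periodic with period T > 0. Let ζ be a simple zero of P (P(ζ) = 0, P'(ζ) ≠ 0) such that the winding number of the closed loop γ|[0,T] around ζ equals 1, while its winding number around every other zero of P equals 0. Then T = 2πi/P'(ζ); equivalently, P'(ζ) = 2πi/T (in particular P'(ζ) is purely imaginary with positive imaginary part). -/
/-!
Along the orbit `dt = dz / P(z)`, so `T = ∮_γ dz / P`. Near the simple zero `ζ`,
`1 / P = P'(ζ)⁻¹ / (z - ζ) + A / Q` with polynomials `A`, `Q` whose zeros are zeros of `P`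
other than `ζ`. The first term contributes `P'(ζ)⁻¹ · 2πi`. The second contributes nothing:
Bézout at each root of `Q` splits `A / Q` into a polynomial and terms `c / (z - p) ^ k`, which
are exact derivatives for `k ≠ 1` and have winding number zero for `k = 1`. The orbit never
meets a zero of `P`, since a solution through an equilibrium is constant.
-/

open Polynomial Set Filter intervalIntegral

theorem Polynomial.exists_derivative_eq {K : Type*} [Field K] [CharZero K] (B : K[X]) :
    ∃ G : K[X], derivative G = B := by
  induction B using Polynomial.induction_on' with
  | add p q hp hq =>
    obtain ⟨F, rfl⟩ := hp
    obtain ⟨G, rfl⟩ := hq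
    exact ⟨F + G, derivative_add⟩
  | monomial n a =>
    refine ⟨monomial (n + 1) (a / (n + 1)), ?_⟩
    rw [derivative_monomial]
    congr 1
    push_cast
    field_simp

theorem Polynomial.exists_inv_eval_eq_inv_derivative_div_sub_add {K : Type*} [Field K]
    {P : K[X]} {ζ : K} (hζ : P.IsRoot ζ) (hsimple : P.derivative.eval ζ ≠ 0) :
    ∃ Q A : K[X], Q.eval ζ ≠ 0 ∧ (∀ z, Q.IsRoot z → P.IsRoot z) ∧
      ∀ z, P.eval z ≠ 0 →
        (P.eval z)⁻¹ = (P.derivative.eval ζ)⁻¹ / (z - ζ) + A.eval z / Q.eval z := by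
  obtain ⟨Q, rfl⟩ : X - C ζ ∣ P := dvd_iff_isRoot.2 hζ
  have hPQ : ∀ z, ((X - C ζ) * Q).eval z = (z - ζ) * Q.eval z := fun z => by simp
  have hQζ : Q.eval ζ = ((X - C ζ) * Q).derivative.eval ζ := by
    rw [derivative_mul]
    simp
  have hQζ0 : Q.eval ζ ≠ 0 := hQζ ▸ hsimple
  obtain ⟨A, hA⟩ : X - C ζ ∣ 1 - C (Q.eval ζ)⁻¹ * Q := dvd_iff_isRoot.2 (by simp [hQζ0])
  refine ⟨Q, A, hQζ0, fun z hz => by rw [IsRoot.def, hPQ, hz.eq_zero, mul_zero], fun z hz => ?_⟩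
  have hA' := congrArg (eval z) hA
  simp only [eval_sub, eval_one, eval_mul, eval_C, eval_X] at hA'
  rw [hPQ] at hz ⊢
  rw [← hQζ]
  have hz1 : z - ζ ≠ 0 := left_ne_zero_of_mul hz
  have hz2 : Q.eval z ≠ 0 := right_ne_zero_of_mul hz
  field_simp
  linear_combination Q.eval ζ * hA' + Q.eval z * mul_inv_cancel₀ hQζ0

theorem Polynomial.eval_div_eval_mul_eq_add {K : Type*} [Field K] {F G u v : K[X]}
    (huv : u * F + v * G = 1) (A : K[X]) {z : K} (hF : F.eval z ≠ 0) (hG : G.eval z ≠ 0) :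
    A.eval z / (F * G).eval z = (A * v).eval z / F.eval z + (A * u).eval z / G.eval z := by
  have huv' := congrArg (Polynomial.eval z) huv
  simp only [eval_add, eval_mul, eval_one] at huv'
  rw [div_add_div _ _ hF hG, eval_mul, eval_mul, eval_mul]
  congr 1
  linear_combination -A.eval z * huv'

theorem ODE_solution_eq_of_apply_eq_zero {E : Type*} [NormedAddCommGroup E] [NormedSpace ℝ E]
    {f : E → E} (hf : LocallyLipschitz f) {γ : ℝ → E} (hγ : ∀ t, HasDerivAt γ (f (γ t)) t)
    {t₀ : ℝ} (h : f (γ t₀) = 0) (t : ℝ) : γ t = γ t₀ := by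
  have hcont : Continuous γ := continuous_iff_continuousAt.2 fun t => (hγ t).continuousAt
  suffices IsClopen {t | γ t = γ t₀} from eq_univ_iff_forall.1 (this.eq_univ ⟨t₀, rfl⟩) t
  refine ⟨isClosed_eq hcont continuous_const,
    isOpen_iff_mem_nhds.2 fun t₁ (ht₁ : γ t₁ = γ t₀) => ?_⟩
  obtain ⟨K, U, hU, hlip⟩ := hf (γ t₀)
  have hconst : ∀ t : ℝ, HasDerivAt (fun _ => γ t₀) (f (γ t₀)) t := fun t => by
    rw [h]
    exact hasDerivAt_const t _
  exact ODE_solution_unique_of_eventually (v := fun _ => f) (s := fun _ => U)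
    (Eventually.of_forall fun _ => hlip)
    ((hcont.continuousAt.eventually_mem (ht₁ ▸ hU)).mono
      fun t ht => ⟨hγ t, ht⟩)
    (Eventually.of_forall fun t => ⟨hconst t, mem_of_mem_nhds hU⟩) ht₁

section LoopIntegral

variable {γ γ' : ℝ → ℂ} {T : ℝ}

theorem integral_mul_deriv_comp_eq_zero (hγ : ∀ t, HasDerivAt γ (γ' t) t)
    (hper : Function.Periodic γ T) {G G' : ℂ → ℂ} (hG : ∀ t, HasDerivAt G (G' (γ t)) (γ t))
    (hcont : Continuous fun t => γ' t * G' (γ t)) :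
    ∫ t in 0..T, γ' t * G' (γ t) = 0 := by
  rw [integral_eq_sub_of_hasDerivAt (f := G ∘ γ) (fun t _ => ?_) (hcont.intervalIntegrable 0 T)]
  · rw [sub_eq_zero]
    simpa using congrArg G (hper 0)
  · rw [mul_comm]
    exact (hG t).comp t (hγ t)

theorem integral_mul_eval_eq_zero (hγ : ∀ t, HasDerivAt γ (γ' t) t) (hγ' : Continuous γ')
    (hper : Function.Periodic γ T) (B : ℂ[X]) :
    ∫ t in 0..T, γ' t * B.eval (γ t) = 0 := by
  have hcont : Continuous γ := continuous_iff_continuousAt.2 fun t => (hγ t).continuousAt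
  obtain ⟨G, rfl⟩ := B.exists_derivative_eq
  exact integral_mul_deriv_comp_eq_zero hγ hper (G' := fun z => (derivative G).eval z)
    (fun t => G.hasDerivAt (γ t)) (by fun_prop)

theorem integral_mul_sub_zpow_eq_zero (hγ : ∀ t, HasDerivAt γ (γ' t) t) (hγ' : Continuous γ')
    (hper : Function.Periodic γ T) {p : ℂ} (hp : ∀ t, γ t ≠ p) {m : ℤ} (hm : m ≠ -1) :
    ∫ t in 0..T, γ' t * (γ t - p) ^ m = 0 := by
  have hcont : Continuous γ := continuous_iff_continuousAt.2 fun t => (hγ t).continuousAt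
  have hsub : ∀ t, γ t - p ≠ 0 := fun t => sub_ne_zero.2 (hp t)
  have hm1 : (m + 1 : ℂ) ≠ 0 := by exact_mod_cast (by omega : m + 1 ≠ 0)
  refine integral_mul_deriv_comp_eq_zero hγ hper (G := fun z => (z - p) ^ (m + 1) / (m + 1))
    (G' := fun z => (z - p) ^ m)
    (fun t => ?_) (by fun_prop (disch := simp [hsub]))
  refine (((hasDerivAt_zpow (m + 1) _ (Or.inl (hsub t))).comp_sub_const (γ t) p).div_const
    (m + 1 : ℂ)).congr_deriv ?_
  rw [add_sub_cancel_right]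
  push_cast
  field_simp

theorem integral_mul_eval_div_sub_pow_eq_zero (hγ : ∀ t, HasDerivAt γ (γ' t) t)
    (hγ' : Continuous γ') (hper : Function.Periodic γ T) {p : ℂ} (hp : ∀ t, γ t ≠ p)
    (hwind : ∫ t in 0..T, γ' t / (γ t - p) = 0) (A : ℂ[X]) (n : ℕ) :
    ∫ t in 0..T, γ' t * (A.eval (γ t) / (γ t - p) ^ n) = 0 := by
  have hcont : Continuous γ := continuous_iff_continuousAt.2 fun t => (hγ t).continuousAt
  have hsub : ∀ t, γ t - p ≠ 0 := fun t => sub_ne_zero.2 (hp t)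
  induction n generalizing A with
  | zero => simpa using integral_mul_eval_eq_zero hγ hγ' hper A
  | succ n ih =>
    obtain ⟨B, hB⟩ : X - C p ∣ A - C (A.eval p) := dvd_iff_isRoot.2 (by simp)
    have hprincipal : ∫ t in 0..T, γ' t * (γ t - p) ^ (-(n + 1 : ℤ)) = 0 := by
      rcases n with _ | n
      · simpa [div_eq_mul_inv] using hwind
      · exact integral_mul_sub_zpow_eq_zero hγ hγ' hper hp (by omega)
    have hsplit : ∀ t, γ' t * (A.eval (γ t) / (γ t - p) ^ (n + 1)) =
        A.eval p * (γ' t * (γ t - p) ^ (-(n + 1 : ℤ))) +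
          γ' t * (B.eval (γ t) / (γ t - p) ^ n) := by
      intro t
      have hBt := congrArg (Polynomial.eval (γ t)) hB
      simp only [eval_sub, eval_C, eval_mul, eval_X] at hBt
      have := hsub t
      rw [zpow_neg, ← Nat.cast_succ, zpow_natCast]
      field_simp
      linear_combination γ' t * (γ t - p) ^ n * hBt
    rw [integral_congr fun t _ => hsplit t, integral_add, integral_const_mul, hprincipal, ih B,
      mul_zero, add_zero]
    · exact Continuous.intervalIntegrable (by fun_prop (disch := simp [hsub])) 0 T
    · exact Continuous.intervalIntegrable (by fun_prop (disch := simp [hsub])) 0 T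

theorem integral_mul_eval_div_eval_eq_zero (hγ : ∀ t, HasDerivAt γ (γ' t) t)
    (hγ' : Continuous γ') (hper : Function.Periodic γ T) {Q : ℂ[X]}
    (hQ : ∀ t, Q.eval (γ t) ≠ 0) (hwind : ∀ p, Q.IsRoot p → ∫ t in 0..T, γ' t / (γ t - p) = 0)
    (A : ℂ[X]) :
    ∫ t in 0..T, γ' t * (A.eval (γ t) / Q.eval (γ t)) = 0 := by
  have hcont : Continuous γ := continuous_iff_continuousAt.2 fun t => (hγ t).continuousAt
  induction hd : Q.natDegree using Nat.strong_induction_on generalizing Q A with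
  | _ d ih =>
  have hQ0 : Q ≠ 0 := fun h => hQ 0 (by simp [h])
  rcases Nat.eq_zero_or_pos d with rfl | hpos
  · rw [eq_C_of_natDegree_eq_zero hd]
    simpa [div_eq_mul_inv, mul_comm] using
      integral_mul_eval_eq_zero hγ hγ' hper (C (Q.coeff 0)⁻¹ * A)
  obtain ⟨p, hp⟩ := Complex.exists_root (natDegree_pos_iff_degree_pos.1 (hd ▸ hpos))
  obtain ⟨R, hQR, hndvd⟩ := Q.exists_eq_pow_rootMultiplicity_mul_and_not_dvd hQ0 p
  set m := rootMultiplicity p Q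
  obtain ⟨u, v, huv⟩ := ((irreducible_X_sub_C p).coprime_iff_not_dvd.2 hndvd).pow_left (m := m)
  have hRroot : ∀ z, R.IsRoot z → Q.IsRoot z := fun z hz => by
    rw [hQR, IsRoot.def, eval_mul, hz.eq_zero, mul_zero]
  have hγp : ∀ t, γ t ≠ p := fun t h => hQ t (h ▸ hp)
  have hRγ : ∀ t, R.eval (γ t) ≠ 0 := fun t h => hQ t (hRroot _ h)
  have hdeg : R.natDegree < d := by
    have hm := (rootMultiplicity_pos hQ0).2 hp
    have := congrArg natDegree hQR
    rw [natDegree_mul (pow_ne_zero _ (X_sub_C_ne_zero p)) fun h => hRγ 0 (by simp [h]),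
      natDegree_pow, natDegree_X_sub_C, mul_one] at this
    omega
  have hsplit : ∀ t, γ' t * (A.eval (γ t) / Q.eval (γ t)) =
      γ' t * ((A * v).eval (γ t) / (γ t - p) ^ m) +
        γ' t * ((A * u).eval (γ t) / R.eval (γ t)) := fun t => by
    have hpow : ((X - C p) ^ m).eval (γ t) ≠ 0 := by
      simpa using pow_ne_zero m (sub_ne_zero.2 (hγp t))
    rw [hQR, eval_div_eval_mul_eq_add huv A hpow (hRγ t), mul_add]
    simp
  rw [integral_congr fun t _ => hsplit t, integral_add,
    integral_mul_eval_div_sub_pow_eq_zero hγ hγ' hper hγp (hwind p hp),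
    ih _ hdeg hRγ (fun z hz => hwind z (hRroot z hz)) _ rfl, add_zero]
  · exact Continuous.intervalIntegrable (by fun_prop (disch := simp [sub_eq_zero, hγp])) 0 T
  · exact Continuous.intervalIntegrable (by fun_prop (disch := exact hRγ)) 0 T

end LoopIntegral

theorem period_eq_two_pi_I_div_deriv_general (P : Polynomial ℂ) (γ : ℝ → ℂ)
    (hode : ∀ t : ℝ, HasDerivAt γ (P.eval (γ t)) t)
    (hnonconst : ∃ t₁ t₂ : ℝ, γ t₁ ≠ γ t₂)
    (T : ℝ) (hper : Function.Periodic γ T)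
    (ζ : ℂ) (hzero : P.eval ζ = 0) (hsimple : P.derivative.eval ζ ≠ 0)
    (hwind1 : (2 * (Real.pi : ℂ) * Complex.I)⁻¹ *
        ∫ t in (0:ℝ)..T, P.eval (γ t) / (γ t - ζ) = 1)
    (hwind0 : ∀ ζ' : ℂ, P.eval ζ' = 0 → ζ' ≠ ζ →
        (2 * (Real.pi : ℂ) * Complex.I)⁻¹ *
          ∫ t in (0:ℝ)..T, P.eval (γ t) / (γ t - ζ') = 0) :
    (T : ℂ) = 2 * (Real.pi : ℂ) * Complex.I / P.derivative.eval ζ := by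
  have hcont : Continuous γ := continuous_iff_continuousAt.2 fun t => (hode t).continuousAt
  have hPγ : ∀ t, P.eval (γ t) ≠ 0 := by
    obtain ⟨t₁, t₂, hne⟩ := hnonconst
    have hlip : LocallyLipschitz fun z => P.eval z := by
      simpa using (P.contDiff_aeval (𝕜 := ℂ) 1).locallyLipschitz
    exact fun t h => hne ((ODE_solution_eq_of_apply_eq_zero hlip hode h t₁).trans
      (ODE_solution_eq_of_apply_eq_zero hlip hode h t₂).symm)
  have h2πI : 2 * (Real.pi : ℂ) * Complex.I ≠ 0 := by simp [Real.pi_ne_zero]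
  obtain ⟨Q, A, hQζ, hQP, hinv⟩ := exists_inv_eval_eq_inv_derivative_div_sub_add hzero hsimple
  have hQγ : ∀ t, Q.eval (γ t) ≠ 0 := fun t h => hPγ t (hQP _ h)
  have hwindQ : ∀ p, Q.IsRoot p → ∫ t in 0..T, P.eval (γ t) / (γ t - p) = 0 := fun p hp =>
    (mul_eq_zero.1 (hwind0 p (hQP p hp) fun h => hQζ (h ▸ hp))).resolve_left (inv_ne_zero h2πI)
  have hsubζ : ∀ t, γ t - ζ ≠ 0 := fun t h => hPγ t (sub_eq_zero.1 h ▸ hzero)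
  calc (T : ℂ) = ∫ t in 0..T, P.eval (γ t) * (P.eval (γ t))⁻¹ := by
        simp [mul_inv_cancel₀ (hPγ _)]
    _ = ∫ t in 0..T, ((P.derivative.eval ζ)⁻¹ * (P.eval (γ t) / (γ t - ζ)) +
          P.eval (γ t) * (A.eval (γ t) / Q.eval (γ t))) := by
        refine integral_congr fun t _ => ?_
        rw [hinv _ (hPγ t)]
        ring
    _ = (P.derivative.eval ζ)⁻¹ * (2 * Real.pi * Complex.I) := by
        rw [integral_add, integral_const_mul, (inv_mul_eq_one₀ h2πI).1 hwind1,
          integral_mul_eval_div_eval_eq_zero (γ' := fun t => P.eval (γ t)) hode (by fun_prop)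
            hper hQγ hwindQ, add_zero]
        · exact Continuous.intervalIntegrable (by fun_prop (disch := exact hsubζ)) 0 T
        · exact Continuous.intervalIntegrable (by fun_prop (disch := exact hQγ)) 0 T
    _ = _ := by ring

/-- Let `γ` be a nonconstant `T`-periodic solution (`T > 0`) of
`γ'(t) = P(γ(t))` for a complex polynomial `P`, and let `ζ` be a simple zero of `P`
around which the loop `γ|[0,T]` has winding number `1`, while it has winding number `0`
around every other zero of `P`. (The winding number around `ζ'` is
`(1/(2πi))·∫₀ᵀ γ'(t)/(γ(t) - ζ') dt`, and `γ' = P ∘ γ`.) Then `T = 2πi/P'(ζ)`. -/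
theorem period_eq_two_pi_I_div_deriv (P : Polynomial ℂ) (γ : ℝ → ℂ)
    (hode : ∀ t : ℝ, HasDerivAt γ (P.eval (γ t)) t)
    (hnonconst : ∃ t₁ t₂ : ℝ, γ t₁ ≠ γ t₂)
    (T : ℝ) (hT : 0 < T) (hper : Function.Periodic γ T)
    (ζ : ℂ) (hzero : P.eval ζ = 0) (hsimple : P.derivative.eval ζ ≠ 0)
    (hwind1 : (2 * (Real.pi : ℂ) * Complex.I)⁻¹ *
        ∫ t in (0:ℝ)..T, P.eval (γ t) / (γ t - ζ) = 1)
    (hwind0 : ∀ ζ' : ℂ, P.eval ζ' = 0 → ζ' ≠ ζ →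
        (2 * (Real.pi : ℂ) * Complex.I)⁻¹ *
          ∫ t in (0:ℝ)..T, P.eval (γ t) / (γ t - ζ') = 0) :
    (T : ℂ) = 2 * (Real.pi : ℂ) * Complex.I / P.derivative.eval ζ :=
  period_eq_two_pi_I_div_deriv_general P γ hode hnonconst T hper ζ hzero hsimple hwind1 hwind0
end
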